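/- arXiv:2506.14735 — 5 statements merged into one kernel-verified Lean document; each statement's English description precedes it below -/
import Mathlib

section
/- Let n ≥ 1, let α < 0, let 0 ≤ l < n be an integer (or real) and p ≥ 0, and assume −1/(n − l + p) < α. Let φ : ℝⁿ → ℝ ∪ {+∞} be proper, convex, lower semi-continuous, nonnegative, and coercive. Then ∫_{ℝⁿ} |x|^p (1 − α φ(x))^{1/α − l} dx < +∞, where the integrand is taken to be 0 at points with φ(x) = +∞. In particular, for −1/n < α < 0 and f = (1 − αφ)^{1/α}, both ∫_{ℝⁿ} f(x) dx and ∫_{ℝⁿ} f(x)^{1−α} dx are finite. -/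
/-!
STATEMENT 0 (Lemma 2.2): integrability of |x|^p (1 - α φ(x))^{1/α - l} for an
α-concave base φ : ℝⁿ → ℝ ∪ {+∞} (proper, convex, lsc, nonnegative, coercive),
when -1/(n - l + p) < α < 0; in particular, for -1/n < α < 0 both
∫ f and ∫ f^{1-α} are finite, where f = (1 - αφ)^{1/α} (equal to 0 where φ = +∞).
-/

noncomputable section

open MeasureTheory Filter Real
open scoped ENNReal RealInnerProductSpace Topology Pointwise

/-- Convexity of an extended-real-valued function on ℝⁿ. -/
def ERealConvexOn {n : ℕ} (φ : EuclideanSpace ℝ (Fin n) → EReal) : Prop :=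
  ∀ x y : EuclideanSpace ℝ (Fin n), ∀ a b : ℝ, 0 ≤ a → 0 ≤ b → a + b = 1 →
    φ (a • x + b • y) ≤ (a : EReal) * φ x + (b : EReal) * φ y

/-- Coercivity: `liminf_{|x|→∞} φ(x)/|x| > 0`, i.e. there is `c > 0` with
`φ(x) ≥ c|x|` for all `x` with `|x|` large enough. -/
def ERealCoercive {n : ℕ} (φ : EuclideanSpace ℝ (Fin n) → EReal) : Prop :=
  ∃ c : ℝ, 0 < c ∧
    ∀ᶠ x in Filter.comap (fun x : EuclideanSpace ℝ (Fin n) => ‖x‖) Filter.atTop,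
      ((c * ‖x‖ : ℝ) : EReal) ≤ φ x

/-- The α-concave function `f = (1 - αφ)^{1/α}`, with the convention `f = 0`
where `φ = +∞`. -/
def acFn {n : ℕ} (α : ℝ) (φ : EuclideanSpace ℝ (Fin n) → EReal)
    (x : EuclideanSpace ℝ (Fin n)) : ℝ :=
  if φ x = ⊤ then 0 else (1 - α * (φ x).toReal) ^ (1 / α)

/-- Key integrability lemma: only nonnegativity and coercivity are needed. -/
lemma key_integrability {n : ℕ} (α l p : ℝ) (hα : α < 0) (hp : 0 ≤ p)
    (hdecay : p + 1/α - l < -(n:ℝ))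
    (φ : EuclideanSpace ℝ (Fin n) → EReal)
    (hnonneg : ∀ x, 0 ≤ φ x)
    (hcoer : ERealCoercive φ) :
    (∫⁻ x, ENNReal.ofReal (‖x‖ ^ p *
        (if φ x = ⊤ then 0 else (1 - α * (φ x).toReal) ^ (1 / α - l))) ∂volume) < ⊤ := by
  obtain ⟨c, hc, hev⟩ := hcoer
  rw [Filter.eventually_comap, Filter.eventually_atTop] at hev
  obtain ⟨R, hR⟩ := hev
  set q : ℝ := 1/α - l with hqdef
  set q' : ℝ := p + q with hq'def
  have hn0 : (0:ℝ) ≤ n := Nat.cast_nonneg n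
  have hq' : q' < 0 := by
    have : p + 1/α - l < 0 := lt_of_lt_of_le hdecay (by linarith)
    simp only [hq'def, hqdef]; linarith
  have hαinv : 1/α < 0 := div_neg_of_pos_of_neg one_pos hα
  have hq : q ≤ 0 := by
    simp only [hqdef]
    rcases le_or_gt 0 l with h | h
    · linarith
    · nlinarith [hdecay]
  set R' : ℝ := max R 0 with hR'def
  have hR'0 : 0 ≤ R' := le_max_right _ _
  set m : ℝ := min 1 (-α * c) with hmdef
  have hm : 0 < m := lt_min one_pos (mul_pos (by linarith) hc)
  set K₁ : ℝ := (1 + R') ^ (p - q') with hK₁def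
  set K₂ : ℝ := m ^ q with hK₂def
  set K : ℝ := max K₁ K₂ with hKdef
  have h1R' : (0:ℝ) < 1 + R' := by linarith
  have hK₁pos : 0 < K₁ := rpow_pos_of_pos h1R' _
  have hKpos : 0 < K := lt_of_lt_of_le hK₁pos (le_max_left _ _)
  have hbound : ∀ x : EuclideanSpace ℝ (Fin n),
      ‖x‖ ^ p * (if φ x = ⊤ then 0 else (1 - α * (φ x).toReal) ^ (1 / α - l))
        ≤ K * (1 + ‖x‖) ^ q' := by
    intro x
    have h1x : (0:ℝ) < 1 + ‖x‖ := by have := norm_nonneg x; linarith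
    have hrhs0 : 0 ≤ K * (1 + ‖x‖) ^ q' :=
      mul_nonneg hKpos.le (rpow_pos_of_pos h1x _).le
    by_cases htop : φ x = ⊤
    · simp [htop, hrhs0]
    · simp only [htop, if_false]
      set t : ℝ := (φ x).toReal with htdef
      have ht0 : 0 ≤ t := by
        simpa using EReal.toReal_le_toReal (hnonneg x) (by simp) htop
      have hb1 : 1 ≤ 1 - α * t := by nlinarith
      have hxp : ‖x‖ ^ p ≤ (1 + ‖x‖) ^ p :=
        rpow_le_rpow (norm_nonneg x) (by linarith) hp
      by_cases hsmall : ‖x‖ ≤ R'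
      · have h1 : (1 - α * t) ^ (1/α - l) ≤ 1 :=
          rpow_le_one_of_one_le_of_nonpos hb1 hq
        have h2 : ‖x‖ ^ p * (1 - α * t) ^ (1/α - l) ≤ (1 + R') ^ p := by
          calc ‖x‖ ^ p * (1 - α * t) ^ (1/α - l) ≤ ‖x‖ ^ p * 1 :=
                mul_le_mul_of_nonneg_left h1 (rpow_nonneg (norm_nonneg x) p)
            _ = ‖x‖ ^ p := mul_one _
            _ ≤ (1 + R') ^ p := rpow_le_rpow (norm_nonneg x) (by linarith) hp
        refine h2.trans ?_
        have h3 : (1 + R') ^ q' ≤ (1 + ‖x‖) ^ q' :=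
          rpow_le_rpow_of_nonpos h1x (by linarith) hq'.le
        calc (1 + R') ^ p = K₁ * (1 + R') ^ q' := by
              rw [hK₁def, ← rpow_add h1R']; ring_nf
          _ ≤ K₁ * (1 + ‖x‖) ^ q' := mul_le_mul_of_nonneg_left h3 hK₁pos.le
          _ ≤ K * (1 + ‖x‖) ^ q' :=
              mul_le_mul_of_nonneg_right (le_max_left _ _) (rpow_pos_of_pos h1x _).le
      · push_neg at hsmall
        have hxR : R ≤ ‖x‖ := le_trans (le_max_left R 0) hsmall.le
        have hct : c * ‖x‖ ≤ t := by
          have h := hR ‖x‖ hxR x rfl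
          have := EReal.toReal_le_toReal h (EReal.coe_ne_bot _) htop
          rw [EReal.toReal_coe] at this; exact this
        have hbm : m * (1 + ‖x‖) ≤ 1 - α * t := by
          have hm1 : m ≤ 1 := min_le_left _ _
          have hm2 : m ≤ -α * c := min_le_right _ _
          have hx0 : (0:ℝ) ≤ ‖x‖ := norm_nonneg x
          have : -α * (c * ‖x‖) ≤ -α * t :=
            mul_le_mul_of_nonneg_left hct (by linarith)
          nlinarith
        have hbq : (1 - α * t) ^ (1/α - l) ≤ m ^ q * (1 + ‖x‖) ^ q := by
          have := rpow_le_rpow_of_nonpos (mul_pos hm h1x) hbm hq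
          rwa [mul_rpow hm.le h1x.le] at this
        calc ‖x‖ ^ p * (1 - α * t) ^ (1/α - l)
            ≤ (1 + ‖x‖) ^ p * (m ^ q * (1 + ‖x‖) ^ q) :=
              mul_le_mul hxp hbq (rpow_pos_of_pos (by nlinarith) _).le
                (rpow_nonneg h1x.le _)
          _ = K₂ * (1 + ‖x‖) ^ q' := by
              rw [hK₂def, hq'def, rpow_add h1x]; ring
          _ ≤ K * (1 + ‖x‖) ^ q' :=
              mul_le_mul_of_nonneg_right (le_max_right _ _) (rpow_pos_of_pos h1x _).le
  have hint : Integrable (fun x : EuclideanSpace ℝ (Fin n) => (1 + ‖x‖) ^ (-(-q'))) volume := by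
    apply integrable_one_add_norm (μ := volume)
    rw [finrank_euclideanSpace_fin]
    simp only [hq'def, hqdef]
    linarith
  simp only [neg_neg] at hint
  calc (∫⁻ x, ENNReal.ofReal (‖x‖ ^ p *
        (if φ x = ⊤ then 0 else (1 - α * (φ x).toReal) ^ (1 / α - l))) ∂volume)
      ≤ ∫⁻ x, ENNReal.ofReal (K * (1 + ‖x‖) ^ q') ∂volume :=
        lintegral_mono fun x => ENNReal.ofReal_le_ofReal (hbound x)
    _ = ENNReal.ofReal K * ∫⁻ x, ENNReal.ofReal ((1 + ‖x‖) ^ q') ∂volume := by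
        simp_rw [ENNReal.ofReal_mul hKpos.le]
        exact lintegral_const_mul' _ _ ENNReal.ofReal_ne_top
    _ < ⊤ := by
        apply ENNReal.mul_lt_top ENNReal.ofReal_lt_top
        exact lt_of_le_of_lt (lintegral_ofReal_le_lintegral_enorm _) hint.2

theorem statement0 {n : ℕ} (hn : 1 ≤ n) (α l p : ℝ) (hα : α < 0)
    (hl0 : 0 ≤ l) (hln : l < n) (hp : 0 ≤ p)
    (hαlp : -(1 / ((n : ℝ) - l + p)) < α)
    (φ : EuclideanSpace ℝ (Fin n) → EReal)
    (hproper : ∃ x, φ x ≠ ⊤)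
    (hconv : ERealConvexOn φ)
    (hlsc : LowerSemicontinuous φ)
    (hnonneg : ∀ x, 0 ≤ φ x)
    (hcoer : ERealCoercive φ) :
    (∫⁻ x, ENNReal.ofReal (‖x‖ ^ p *
        (if φ x = ⊤ then 0 else (1 - α * (φ x).toReal) ^ (1 / α - l))) ∂volume) < ⊤ ∧
    (-(1 / (n : ℝ)) < α →
      (∫⁻ x, ENNReal.ofReal (acFn α φ x) ∂volume) < ⊤ ∧
      (∫⁻ x, ENNReal.ofReal (acFn α φ x ^ (1 - α)) ∂volume) < ⊤) := by
  have hn' : (1:ℝ) ≤ n := by exact_mod_cast hn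
  constructor
  · have hD : 0 < (n:ℝ) - l + p := by linarith
    have hDα : -1 < ((n:ℝ) - l + p) * α := by
      have h := (mul_lt_mul_iff_right₀ hD).mpr hαlp
      rw [mul_neg, mul_one_div, div_self hD.ne'] at h
      linarith
    have hinv : 1/α < -((n:ℝ) - l + p) := by
      rw [div_lt_iff_of_neg hα]
      nlinarith
    exact key_integrability α l p hα hp (by linarith) φ hnonneg hcoer
  · intro hα'
    have hnpos : (0:ℝ) < n := by linarith
    have hnα : -1 < (n:ℝ) * α := by
      have h := (mul_lt_mul_iff_right₀ hnpos).mpr hα'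
      rw [mul_neg, mul_one_div, div_self hnpos.ne'] at h
      linarith
    have hinv : 1/α < -(n:ℝ) := by
      rw [div_lt_iff_of_neg hα]
      nlinarith
    constructor
    · have h := key_integrability α 0 0 hα le_rfl (by linarith) φ hnonneg hcoer
      have hpt : ∀ x : EuclideanSpace ℝ (Fin n), acFn α φ x =
          ‖x‖ ^ (0:ℝ) * (if φ x = ⊤ then 0 else (1 - α * (φ x).toReal) ^ (1/α - 0)) := by
        intro x
        simp [acFn, Real.rpow_zero]
      calc (∫⁻ x, ENNReal.ofReal (acFn α φ x) ∂volume)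
          = ∫⁻ x, ENNReal.ofReal (‖x‖ ^ (0:ℝ) *
              (if φ x = ⊤ then 0 else (1 - α * (φ x).toReal) ^ (1/α - 0))) ∂volume :=
            lintegral_congr fun x => by rw [hpt x]
        _ < ⊤ := h
    · have h := key_integrability α 1 0 hα le_rfl (by linarith) φ hnonneg hcoer
      have hpt : ∀ x : EuclideanSpace ℝ (Fin n), acFn α φ x ^ (1 - α) =
          ‖x‖ ^ (0:ℝ) * (if φ x = ⊤ then 0 else (1 - α * (φ x).toReal) ^ (1/α - 1)) := by
        intro x
        rw [Real.rpow_zero, one_mul]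
        unfold acFn
        by_cases htop : φ x = ⊤
        · simp [htop, Real.zero_rpow (by linarith : (1:ℝ) - α ≠ 0)]
        · simp only [htop, if_false]
          have ht0 : 0 ≤ (φ x).toReal := by
            simpa using EReal.toReal_le_toReal (hnonneg x) (by simp) htop
          have hb : (0:ℝ) ≤ 1 - α * (φ x).toReal := by nlinarith
          rw [← Real.rpow_mul hb]
          congr 1
          rw [mul_sub, mul_one, one_div_mul_cancel hα.ne]
      calc (∫⁻ x, ENNReal.ofReal (acFn α φ x ^ (1 - α)) ∂volume)
          = ∫⁻ x, ENNReal.ofReal (‖x‖ ^ (0:ℝ) *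
              (if φ x = ⊤ then 0 else (1 - α * (φ x).toReal) ^ (1/α - 1))) ∂volume :=
            lintegral_congr fun x => by rw [hpt x]
        _ < ⊤ := h
end
end

section
/- Let μ be a probability measure on ℝⁿ with finite first moment whose support is not contained in any hyperplane of ℝⁿ. Then there exists a constant c = c_μ > 0 such that for every probability measure ϱ on ℝⁿ with finite first moment and barycenter at the origin (∫ x dϱ(x) = 0), one has T(ϱ, μ) ≥ c ∫_{ℝⁿ} |x| dϱ(x). -/
/-!
STATEMENT 1 (Proposition 2.6): if μ is a probability measure on ℝⁿ with finite
first moment whose support is not contained in any hyperplane, then there is a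
constant c = c_μ > 0 such that T(ϱ, μ) ≥ c ∫|x| dϱ for every probability
measure ϱ with finite first moment and barycenter at the origin.  Here
T(ϱ, μ) = sup { ∫ ⟨x,y⟩ dπ : π a coupling of ϱ and μ } is the maximal
correlation functional.
-/

noncomputable section

open MeasureTheory Filter Real
open scoped ENNReal RealInnerProductSpace Topology

/-- The maximal correlation functional
`T(ϱ, μ) = sup { ∫ ⟨x,y⟩ dπ : π has marginals ϱ and μ }`, as an extended real
number (the supremum is over couplings for which the cost is integrable). -/
noncomputable def Tcorr {n : ℕ} (ϱ μ : Measure (EuclideanSpace ℝ (Fin n))) : EReal :=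
  ⨆ (γ : Measure (EuclideanSpace ℝ (Fin n) × EuclideanSpace ℝ (Fin n)))
    (_ : γ.map Prod.fst = ϱ ∧ γ.map Prod.snd = μ ∧
      Integrable (fun q => ⟪q.1, q.2⟫) γ),
    ((∫ q, ⟪q.1, q.2⟫ ∂γ : ℝ) : EReal)

namespace Statement1Aux

variable {n : ℕ}

local notation "E" => EuclideanSpace ℝ (Fin n)

/-- normalized barycenter of `μ` on `S` -/
def bary (μ : Measure E) (S : Set E) : E :=
  (μ S).toReal⁻¹ • ∫ y in S, y ∂μ

lemma exists_good_family (μ : Measure E) (hprob : IsProbabilityMeasure μ)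
    (hmom : Integrable (fun x => ‖x‖) μ)
    (hsupp : ∀ (ξ : E) (c : ℝ), ξ ≠ 0 → 0 < μ {x | ⟪ξ, x⟫ ≠ c}) :
    ∃ (N : ℕ) (S : Fin N → Set E) (v : E) (c₀ : ℝ), 0 < N ∧ 0 < c₀ ∧
      (∀ j, MeasurableSet (S j)) ∧ (∀ j, 0 < μ (S j)) ∧
      ∀ x : E, ∃ j, c₀ * ‖x‖ ≤ ⟪x, bary μ (S j) - v⟫ := by
  have hid : Integrable (fun y : E => y) μ :=
    (integrable_norm_iff aestronglyMeasurable_id).mp hmom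
  -- the set of barycenters
  set B : Set E := {b : E | ∃ S : Set E, MeasurableSet S ∧ 0 < μ S ∧ bary μ S = b} with hB
  have hBuniv : bary μ Set.univ ∈ B := ⟨Set.univ, MeasurableSet.univ, by simp, rfl⟩
  -- B affinely spans
  have hspan : affineSpan ℝ B = ⊤ := by
    by_contra hne
    have hBne : (affineSpan ℝ B : Set E).Nonempty := ⟨_, subset_affineSpan ℝ B hBuniv⟩
    have hdir : (affineSpan ℝ B).direction ≠ ⊤ := by
      intro h
      exact hne ((AffineSubspace.direction_eq_top_iff_of_nonempty hBne).mp h)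
    have horth : ((affineSpan ℝ B).direction)ᗮ ≠ ⊥ := by
      intro h
      exact hdir (Submodule.orthogonal_eq_bot_iff.mp h)
    obtain ⟨ξ, hξV, hξ0⟩ := Submodule.exists_mem_ne_zero_of_ne_bot horth
    set c : ℝ := ⟪ξ, bary μ Set.univ⟫ with hc
    -- all barycenters have the same inner product with ξ
    have key : ∀ S : Set E, MeasurableSet S → 0 < μ S → ⟪ξ, bary μ S⟫ = c := by
      intro S hSm hSpos
      have h1 : bary μ S -ᵥ bary μ Set.univ ∈ (affineSpan ℝ B).direction :=
        AffineSubspace.vsub_mem_direction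
          (subset_affineSpan ℝ B ⟨S, hSm, hSpos, rfl⟩) (subset_affineSpan ℝ B hBuniv)
      have h2 : ⟪ξ, bary μ S - bary μ Set.univ⟫ = 0 :=
        Submodule.inner_left_of_mem_orthogonal h1 hξV
      rw [inner_sub_right] at h2
      linarith [h2]
    -- hence all set integrals of ⟪ξ, ·⟫ are proportional to measure
    have key2 : ∀ S : Set E, MeasurableSet S → ∫ y in S, ⟪ξ, y⟫ ∂μ = c * (μ S).toReal := by
      intro S hSm
      rcases eq_or_lt_of_le (zero_le : (0:ℝ≥0∞) ≤ μ S) with h0 | hpos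
      · have : μ S = 0 := h0.symm
        rw [Measure.restrict_eq_zero.mpr this]
        simp [this]
      · have htop : μ S ≠ ⊤ := measure_ne_top μ S
        have htR : (μ S).toReal ≠ 0 := by
          simp [ENNReal.toReal_eq_zero_iff, hpos.ne', htop]
        have := key S hSm hpos
        rw [bary, real_inner_smul_right, ← integral_inner (hid.integrableOn) ξ,
          inv_mul_eq_iff_eq_mul₀ htR] at this
        rw [this, mul_comm]
    -- positive and negative parts
    have hcont : Continuous fun y : E => ⟪ξ, y⟫ := Continuous.inner continuous_const continuous_id
    have hint : Integrable (fun y : E => ⟪ξ, y⟫) μ := by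
      refine Integrable.mono' (hmom.const_mul ‖ξ‖) (hcont.aestronglyMeasurable) ?_
      filter_upwards with y
      rw [Real.norm_eq_abs]
      exact abs_real_inner_le_norm ξ y
    have hzero : ∀ (S : Set E), MeasurableSet S → (∀ y ∈ S, c < ⟪ξ, y⟫) ∨ (∀ y ∈ S, ⟪ξ, y⟫ < c) → μ S = 0 := by
      intro S hSm hcase
      by_contra hpos0
      have hSpos : 0 < μ S := lt_of_le_of_ne zero_le (Ne.symm hpos0)
      -- consider g = ±(⟪ξ,y⟫ - c)
      obtain hgt | hlt := hcase
      · set g : E → ℝ := fun y => ⟪ξ, y⟫ - c with hg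
        have hgint : IntegrableOn g S μ := (hint.sub (integrable_const c)).integrableOn
        have hnonneg : 0 ≤ᵐ[μ.restrict S] g := by
          refine ae_restrict_of_forall_mem hSm fun y hy => ?_
          have := hgt y hy
          simp only [hg, Pi.zero_apply]; linarith
        have hpos2 : 0 < ∫ y in S, g y ∂μ := by
          rw [setIntegral_pos_iff_support_of_nonneg_ae hnonneg hgint]
          have hsub : S ⊆ Function.support g := by
            intro y hy
            have := hgt y hy
            simp only [Function.mem_support, hg]
            exact sub_ne_zero.mpr this.ne'
          rwa [Set.inter_eq_right.mpr hsub]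
        have hval : ∫ y in S, g y ∂μ = 0 := by
          rw [hg]
          rw [integral_sub hint.integrableOn (integrable_const c), key2 S hSm, setIntegral_const]
          simp [smul_eq_mul, mul_comm, measureReal_def]
        rw [hval] at hpos2; exact lt_irrefl _ hpos2
      · set g : E → ℝ := fun y => c - ⟪ξ, y⟫ with hg
        have hgint : IntegrableOn g S μ := ((integrable_const c).sub hint).integrableOn
        have hnonneg : 0 ≤ᵐ[μ.restrict S] g := by
          refine ae_restrict_of_forall_mem hSm fun y hy => ?_
          have := hlt y hy
          simp only [hg, Pi.zero_apply]; linarith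
        have hpos2 : 0 < ∫ y in S, g y ∂μ := by
          rw [setIntegral_pos_iff_support_of_nonneg_ae hnonneg hgint]
          have hsub : S ⊆ Function.support g := by
            intro y hy
            have := hlt y hy
            simp only [Function.mem_support, hg]
            exact sub_ne_zero.mpr this.ne'
          rwa [Set.inter_eq_right.mpr hsub]
        have hval : ∫ y in S, g y ∂μ = 0 := by
          rw [hg]
          rw [integral_sub (integrable_const c) hint.integrableOn, key2 S hSm, setIntegral_const]
          simp [smul_eq_mul, mul_comm, measureReal_def]
        rw [hval] at hpos2; exact lt_irrefl _ hpos2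
    have hSp : μ {y : E | c < ⟪ξ, y⟫} = 0 :=
      hzero _ (measurableSet_lt measurable_const hcont.measurable) (Or.inl fun y hy => hy)
    have hSm' : μ {y : E | ⟪ξ, y⟫ < c} = 0 :=
      hzero _ (measurableSet_lt hcont.measurable measurable_const) (Or.inr fun y hy => hy)
    have hcover : {x : E | ⟪ξ, x⟫ ≠ c} ⊆ {y : E | c < ⟪ξ, y⟫} ∪ {y : E | ⟪ξ, y⟫ < c} := by
      intro x hx
      rcases lt_or_gt_of_ne (hx : ⟪ξ, x⟫ ≠ c) with h | h
      · exact Or.inr h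
      · exact Or.inl h
    have : μ {x : E | ⟪ξ, x⟫ ≠ c} = 0 :=
      le_antisymm (le_trans (measure_mono hcover)
        (le_trans (measure_union_le _ _) (by rw [hSp, hSm']; simp))) zero_le
    exact absurd this (ne_of_gt (hsupp ξ c hξ0))
  -- extract a finite affinely independent spanning subset of B
  obtain ⟨t, htB, htspan, htind⟩ := exists_affineIndependent ℝ (EuclideanSpace ℝ (Fin n)) B
  rw [hspan] at htspan
  have htfin : t.Finite := finite_set_of_fin_dim_affineIndependent ℝ htind
  obtain ⟨v, hv⟩ := interior_convexHull_nonempty_iff_affineSpan_eq_top.mpr htspan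
  have htne : t.Nonempty := by
    rcases t.eq_empty_or_nonempty with h | h
    · exfalso
      rw [h, AffineSubspace.span_empty] at htspan
      have : (0 : E) ∈ (⊥ : AffineSubspace ℝ (EuclideanSpace ℝ (Fin n))) := by
        rw [htspan]; trivial
      exact this
    · exact h
  classical
  set tf : Finset (EuclideanSpace ℝ (Fin n)) := htfin.toFinset with htf
  set N : ℕ := tf.card with hNdef
  have hNpos : 0 < N := Finset.card_pos.mpr (htfin.toFinset_nonempty.mpr htne)
  set b : Fin N → E := fun j => ((tf.equivFin.symm j : tf) : EuclideanSpace ℝ (Fin n)) with hbdef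
  have hbmem : ∀ j, b j ∈ B := fun j => htB (htfin.mem_toFinset.mp (tf.equivFin.symm j).2)
  have hsurj : ∀ y ∈ t, ∃ j, b j = y := by
    intro y hy
    refine ⟨tf.equivFin ⟨y, htfin.mem_toFinset.mpr hy⟩, ?_⟩
    simp [hbdef]
  -- the main directional positivity
  have hdirpos : ∀ ξ : E, ξ ≠ 0 → ∃ j, 0 < ⟪ξ, b j - v⟫ := by
    intro ξ hξ
    by_contra h
    push_neg at h
    have hH : convexHull ℝ t ⊆ {y : E | ⟪ξ, y⟫ ≤ ⟪ξ, v⟫} := by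
      refine convexHull_min ?_ ?_
      · intro y hy
        obtain ⟨j, rfl⟩ := hsurj y hy
        have := h j
        rw [inner_sub_right] at this
        simp only [Set.mem_setOf_eq]
        linarith
      · exact convex_halfSpace_le
          ⟨fun a b => inner_add_right ξ a b, fun r a => real_inner_smul_right ξ a r⟩ _
    obtain ⟨ε, hε, hball⟩ := Metric.mem_nhds_iff.mp (mem_interior_iff_mem_nhds.mp hv)
    have hξn : (0:ℝ) < ‖ξ‖ := norm_pos_iff.mpr hξ
    set u : E := v + (ε / (2 * ‖ξ‖)) • ξ with hu
    have humem : u ∈ Metric.ball v ε := by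
      rw [Metric.mem_ball, dist_eq_norm]
      have : u - v = (ε / (2 * ‖ξ‖)) • ξ := by rw [hu]; abel
      rw [this, norm_smul, Real.norm_eq_abs, abs_of_pos (by positivity)]
      have heq : ε / (2 * ‖ξ‖) * ‖ξ‖ = ε / 2 := by field_simp
      rw [heq]
      linarith
    have huH : u ∈ {y : E | ⟪ξ, y⟫ ≤ ⟪ξ, v⟫} := hH (hball humem)
    have : ⟪ξ, u⟫ = ⟪ξ, v⟫ + (ε / (2 * ‖ξ‖)) * (‖ξ‖^2) := by
      rw [hu, inner_add_right, real_inner_smul_right, real_inner_self_eq_norm_sq]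
    have hpos : 0 < (ε / (2 * ‖ξ‖)) * (‖ξ‖^2) := by positivity
    have := huH
    simp only [Set.mem_setOf_eq] at this
    linarith [‹⟪ξ, u⟫ = ⟪ξ, v⟫ + (ε / (2 * ‖ξ‖)) * (‖ξ‖^2)›]
  -- choose the family of sets realising the barycenters
  choose Sf hSm hSpos hSbary using fun j => hbmem j
  -- find the uniform constant c₀
  have hmain : ∃ c₀ : ℝ, 0 < c₀ ∧ ∀ x : E, ∃ j, c₀ * ‖x‖ ≤ ⟪x, b j - v⟫ := by
    by_cases hsph : ∃ ξ : E, ‖ξ‖ = 1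
    · obtain ⟨ξ₁, hξ₁⟩ := hsph
      set F : E → ℝ := fun ξ => ∑ j : Fin N, max ⟪ξ, b j - v⟫ 0 with hF
      have hFcont : Continuous F := continuous_finset_sum _ fun j _ =>
        (Continuous.inner continuous_id continuous_const).max continuous_const
      obtain ⟨ξ₀, hξ₀mem, hmin⟩ := (isCompact_sphere (0:E) 1).exists_isMinOn
        ⟨ξ₁, by simp [hξ₁]⟩ hFcont.continuousOn
      have hξ₀norm : ‖ξ₀‖ = 1 := by simpa using hξ₀mem
      have hξ₀0 : ξ₀ ≠ 0 := by
        intro hh; rw [hh] at hξ₀norm; simp at hξ₀norm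
      obtain ⟨j₀, hj₀⟩ := hdirpos ξ₀ hξ₀0
      have hm : 0 < F ξ₀ := by
        calc (0:ℝ) < ⟪ξ₀, b j₀ - v⟫ := hj₀
        _ ≤ max ⟪ξ₀, b j₀ - v⟫ 0 := le_max_left _ _
        _ ≤ F ξ₀ := by
            rw [hF]
            exact Finset.single_le_sum (f := fun j => max ⟪ξ₀, b j - v⟫ 0)
              (fun j _ => le_max_right _ 0) (Finset.mem_univ j₀)
      refine ⟨F ξ₀ / N, div_pos hm (by exact_mod_cast hNpos), ?_⟩
      intro x
      by_cases hx : x = 0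
      · exact ⟨j₀, by simp [hx]⟩
      · have hxn : (0:ℝ) < ‖x‖ := norm_pos_iff.mpr hx
        set ξ : E := ‖x‖⁻¹ • x with hξdef
        have hξs : ξ ∈ Metric.sphere (0:E) 1 := by
          simp only [mem_sphere_iff_norm, sub_zero, hξdef, norm_smul, Real.norm_eq_abs,
            abs_of_pos (inv_pos.mpr hxn)]
          field_simp
        have hFξ : F ξ₀ ≤ F ξ := hmin hξs
        have hexj : ∃ j, F ξ₀ / N ≤ max ⟪ξ, b j - v⟫ 0 := by
          by_contra hcon
          push_neg at hcon
          have hlt : F ξ < ∑ _j : Fin N, F ξ₀ / N :=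
            Finset.sum_lt_sum_of_nonempty (Finset.univ_nonempty_iff.mpr
              ⟨⟨0, hNpos⟩⟩) fun j _ => hcon j
          rw [Finset.sum_const, Finset.card_univ, Fintype.card_fin, nsmul_eq_mul,
            mul_div_cancel₀ _ (by exact_mod_cast hNpos.ne' : (N:ℝ) ≠ 0)] at hlt
          linarith
        obtain ⟨j, hj⟩ := hexj
        have hc₀pos : 0 < F ξ₀ / N := div_pos hm (by exact_mod_cast hNpos)
        have hj' : F ξ₀ / N ≤ ⟪ξ, b j - v⟫ := by
          rcases le_max_iff.mp hj with hcase | hcase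
          · exact hcase
          · linarith
        refine ⟨j, ?_⟩
        have hxinner : ⟪x, b j - v⟫ = ‖x‖ * ⟪ξ, b j - v⟫ := by
          rw [hξdef, real_inner_smul_left]
          field_simp
        rw [hxinner, mul_comm (F ξ₀ / N) ‖x‖]
        exact mul_le_mul_of_nonneg_left hj' (norm_nonneg x)
    · -- degenerate case: every vector is 0
      push_neg at hsph
      refine ⟨1, one_pos, fun x => ?_⟩
      by_cases hx : x = 0
      · exact ⟨⟨0, hNpos⟩, by simp [hx]⟩
      · exfalso
        have hxn : (0:ℝ) < ‖x‖ := norm_pos_iff.mpr hx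
        have : ‖(‖x‖⁻¹ • x : E)‖ = 1 := by
          rw [norm_smul, Real.norm_eq_abs, abs_of_pos (inv_pos.mpr hxn)]
          field_simp
        exact hsph _ this
  obtain ⟨c₀, hc₀, hclaim⟩ := hmain
  refine ⟨N, Sf, v, c₀, hNpos, hc₀, hSm, hSpos, fun x => ?_⟩
  obtain ⟨j, hj⟩ := hclaim x
  exact ⟨j, by rwa [hSbary j]⟩



lemma map_finset_sum' {α β ι : Type*} [MeasurableSpace α] [MeasurableSpace β]
    {f : α → β} (hf : Measurable f) (s : Finset ι) (m : ι → Measure α) :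
    (∑ i ∈ s, m i).map f = ∑ i ∈ s, (m i).map f := by
  classical
  induction s using Finset.induction with
  | empty => simp
  | insert _ _ h ih =>
      rw [Finset.sum_insert h, Finset.sum_insert h, Measure.map_add _ _ hf, ih]

lemma integrable_inner_prod (μ₁ μ₂ : Measure E) [IsFiniteMeasure μ₁] [IsFiniteMeasure μ₂]
    (h1 : Integrable (fun x => ‖x‖) μ₁) (h2 : Integrable (fun x => ‖x‖) μ₂) :
    Integrable (fun q : E × E => ⟪q.1, q.2⟫) (μ₁.prod μ₂) := by
  have hb : Integrable (fun q : E × E => ‖q.1‖ * ‖q.2‖) (μ₁.prod μ₂) := h1.mul_prod h2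
  refine hb.mono' ((Continuous.inner continuous_fst continuous_snd).aestronglyMeasurable) ?_
  filter_upwards with q
  rw [Real.norm_eq_abs]
  exact abs_real_inner_le_norm _ _


end Statement1Aux

open Statement1Aux in
set_option maxHeartbeats 1000000 in
theorem statement1 {n : ℕ} (μ : Measure (EuclideanSpace ℝ (Fin n)))
    (hprob : IsProbabilityMeasure μ)
    (hmom : Integrable (fun x => ‖x‖) μ)
    -- the support of μ is not contained in any (affine) hyperplane: every
    -- hyperplane has a complement of positive μ-measure
    (hsupp : ∀ (ξ : EuclideanSpace ℝ (Fin n)) (c : ℝ), ξ ≠ 0 →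
      0 < μ {x | ⟪ξ, x⟫ ≠ c}) :
    ∃ c : ℝ, 0 < c ∧
      ∀ ϱ : Measure (EuclideanSpace ℝ (Fin n)), IsProbabilityMeasure ϱ →
        Integrable (fun x => ‖x‖) ϱ → (∫ x, x ∂ϱ) = 0 →
        ((c * ∫ x, ‖x‖ ∂ϱ : ℝ) : EReal) ≤ Tcorr ϱ μ := by
  classical
  haveI := hprob
  obtain ⟨N, S, v, c₀, hN, hc₀, hSmeas, hSpos, hgood⟩ :=
    Statement1Aux.exists_good_family μ hprob hmom hsupp
  have hμS0 : ∀ j, μ (S j) ≠ 0 := fun j => (hSpos j).ne'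
  have hμST : ∀ j, μ (S j) ≠ ⊤ := fun j => measure_ne_top μ _
  -- normalized pieces of μ
  set κ : Fin N → Measure (EuclideanSpace ℝ (Fin n)) := fun j => (μ (S j))⁻¹ • μ.restrict (S j) with hκ
  have hκuniv : ∀ j, κ j Set.univ = 1 := by
    intro j
    rw [hκ]
    simp only [Measure.smul_apply, smul_eq_mul, Measure.restrict_apply_univ]
    exact ENNReal.inv_mul_cancel (hμS0 j) (hμST j)
  have hκmom : ∀ j, Integrable (fun x => ‖x‖) (κ j) := by
    intro j
    rw [hκ]
    exact (hmom.restrict).smul_measure (ENNReal.inv_ne_top.mpr (hμS0 j))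
  have hκbar : ∀ j, ∫ y, y ∂(κ j) = Statement1Aux.bary μ (S j) := by
    intro j
    rw [hκ, integral_smul_measure, Statement1Aux.bary, ENNReal.toReal_inv]
  -- choice of ε
  have hεex : ∃ ε : ℝ≥0∞, 0 < ε ∧ ε ≠ ⊤ ∧ ε ≤ 1 ∧ ∀ j, (N:ℝ≥0∞) * ε ≤ μ (S j) := by
    have hne : (Finset.univ : Finset (Fin N)).Nonempty := ⟨⟨0, hN⟩, Finset.mem_univ _⟩
    set m := Finset.univ.inf' hne (fun j => μ (S j)) with hm
    obtain ⟨j₀, _, hj₀⟩ := Finset.exists_mem_eq_inf' hne (fun j => μ (S j))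
    have hm0 : m ≠ 0 := by rw [hm, hj₀]; exact hμS0 j₀
    have hmT : m ≠ ⊤ := by rw [hm, hj₀]; exact hμST j₀
    have hNne : ((N:ℝ≥0∞)) ≠ 0 := by exact_mod_cast hN.ne'
    refine ⟨min 1 (m / N), ?_, ?_, min_le_left _ _, ?_⟩
    · rw [lt_min_iff]
      exact ⟨zero_lt_one, ENNReal.div_pos hm0 (by simp)⟩
    · exact ne_top_of_le_ne_top ENNReal.one_ne_top (min_le_left _ _)
    · intro j
      calc (N:ℝ≥0∞) * min 1 (m / N) ≤ (N:ℝ≥0∞) * (m / N) :=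
            mul_le_mul_right (min_le_right _ _) _
        _ = m := ENNReal.mul_div_cancel hNne (by simp)
        _ ≤ μ (S j) := by rw [hm]; exact Finset.inf'_le _ (Finset.mem_univ j)
  obtain ⟨ε, hε0, hεT, hε1, hεN⟩ := hεex
  have hεtR : 0 < ε.toReal := ENNReal.toReal_pos hε0.ne' hεT
  refine ⟨ε.toReal * c₀, mul_pos hεtR hc₀, ?_⟩
  intro ϱ hϱprob hϱmom hϱbar
  haveI := hϱprob
  have hidϱ : Integrable (fun x : (EuclideanSpace ℝ (Fin n)) => x) ϱ :=
    (integrable_norm_iff aestronglyMeasurable_id).mp hϱmom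
  -- the partition
  set g : Fin N → Set (EuclideanSpace ℝ (Fin n)) :=
    fun j => {x | c₀ * ‖x‖ ≤ ⟪x, Statement1Aux.bary μ (S j) - v⟫} with hgdef
  have hgmeas : ∀ j, MeasurableSet (g j) := fun j =>
    measurableSet_le (measurable_const.mul measurable_norm)
      (Continuous.inner continuous_id continuous_const).measurable
  set A : Fin N → Set (EuclideanSpace ℝ (Fin n)) := fun j => g j \ ⋃ (k : Fin N) (_ : k < j), g k with hA
  have hAmeas : ∀ j, MeasurableSet (A j) := fun j =>
    (hgmeas j).diff (MeasurableSet.iUnion fun k => MeasurableSet.iUnion fun _ => hgmeas k)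
  have hAsub : ∀ j, A j ⊆ g j := fun j => Set.diff_subset
  have hAdisj' : ∀ i j : Fin N, i < j → Disjoint (A i) (A j) := by
    intro i j hij
    rw [Set.disjoint_left]
    intro x hxi hxj
    have hxg : x ∈ g i := hAsub i hxi
    have : x ∉ ⋃ (k : Fin N) (_ : k < j), g k := hxj.2
    exact this (Set.mem_iUnion.mpr ⟨i, Set.mem_iUnion.mpr ⟨hij, hxg⟩⟩)
  have hAdisj : Pairwise (Function.onFun Disjoint A) := by
    intro i j hij
    rcases lt_or_gt_of_ne hij with h | h
    · exact hAdisj' i j h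
    · exact (hAdisj' j i h).symm
  have hAcover : ⋃ j, A j = Set.univ := by
    ext x
    simp only [Set.mem_univ, iff_true, Set.mem_iUnion]
    have hxg : ∃ j, x ∈ g j := by
      obtain ⟨j, hj⟩ := hgood x
      exact ⟨j, hj⟩
    set T : Finset (Fin N) := Finset.univ.filter (fun j => x ∈ g j) with hT
    have hTne : T.Nonempty := by
      obtain ⟨j, hj⟩ := hxg
      exact ⟨j, by simp [hT, hj]⟩
    refine ⟨T.min' hTne, ?_⟩
    constructor
    · have := T.min'_mem hTne
      simp only [hT, Finset.mem_filter] at this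
      exact this.2
    · intro hmem
      obtain ⟨k, hk⟩ := Set.mem_iUnion.mp hmem
      obtain ⟨hklt, hkg⟩ := Set.mem_iUnion.mp hk
      have : T.min' hTne ≤ k := T.min'_le k (by simp [hT, hkg])
      exact absurd hklt (not_lt.mpr this)
  -- partition of ϱ
  have hpsum : ∑ j, ϱ (A j) = 1 := by
    rw [← tsum_fintype (L := SummationFilter.unconditional _), ← measure_iUnion hAdisj hAmeas, hAcover, measure_univ]
  set p : Fin N → ℝ≥0∞ := fun j => ϱ (A j) with hp
  -- the correction measure
  set ν : Measure (EuclideanSpace ℝ (Fin n)) := ∑ j, (p j * ε) • κ j with hν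
  have hνle : ν ≤ μ := by
    refine Measure.le_iff.mpr fun s hs => ?_
    rw [hν, Measure.finset_sum_apply]
    have hterm : ∀ j, ((p j * ε) • κ j) s ≤ (N:ℝ≥0∞)⁻¹ * μ s := by
      intro j
      rw [Measure.smul_apply, smul_eq_mul, hκ]
      simp only [Measure.smul_apply, smul_eq_mul]
      rw [Measure.restrict_apply hs]
      have h1 : p j ≤ 1 := prob_le_one
      have h2 : (μ (S j))⁻¹ ≤ ((N:ℝ≥0∞) * ε)⁻¹ := ENNReal.inv_le_inv' (hεN j)
      have hNne : ((N:ℝ≥0∞)) ≠ 0 := by exact_mod_cast hN.ne'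
      calc p j * ε * ((μ (S j))⁻¹ * μ (s ∩ S j))
          ≤ 1 * ε * (((N:ℝ≥0∞) * ε)⁻¹ * μ s) :=
            mul_le_mul' (mul_le_mul' h1 le_rfl)
              (mul_le_mul' h2 (measure_mono Set.inter_subset_left))
        _ = (N:ℝ≥0∞)⁻¹ * (ε * ε⁻¹) * μ s := by
            rw [one_mul, ENNReal.mul_inv (Or.inl hNne) (Or.inr hε0.ne')]
            ring
        _ = (N:ℝ≥0∞)⁻¹ * μ s := by
            rw [ENNReal.mul_inv_cancel hε0.ne' hεT, mul_one]
    calc ∑ j, ((p j * ε) • κ j) s ≤ ∑ _j : Fin N, (N:ℝ≥0∞)⁻¹ * μ s :=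
          Finset.sum_le_sum (fun j _ => hterm j)
      _ = (N:ℝ≥0∞) * ((N:ℝ≥0∞)⁻¹ * μ s) := by
          rw [Finset.sum_const, Finset.card_univ, Fintype.card_fin, nsmul_eq_mul]
      _ = μ s := by
          rw [← mul_assoc, ENNReal.mul_inv_cancel (by exact_mod_cast hN.ne')
            (ENNReal.natCast_ne_top N), one_mul]
  haveI hνfin : IsFiniteMeasure ν := by
    constructor
    have h := Measure.le_iff'.mp hνle Set.univ
    exact lt_of_le_of_lt h (measure_lt_top μ _)
  set μ₀ : Measure (EuclideanSpace ℝ (Fin n)) := μ - ν with hμ₀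
  have hμ₀le : μ₀ ≤ μ := Measure.sub_le
  have hμ₀add : μ₀ + ν = μ := Measure.sub_add_cancel_of_le hνle
  haveI hμ₀fin : IsFiniteMeasure μ₀ := by
    constructor
    have h := Measure.le_iff'.mp hμ₀le Set.univ
    exact lt_of_le_of_lt h (measure_lt_top μ _)
  -- moments
  have hmomμ₀ : Integrable (fun x => ‖x‖) μ₀ := hmom.mono_measure hμ₀le
  have hidμ₀ : Integrable (fun x : (EuclideanSpace ℝ (Fin n)) => x) μ₀ :=
    (integrable_norm_iff aestronglyMeasurable_id).mp hmomμ₀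
  have hmomεκ : ∀ j, Integrable (fun x => ‖x‖) (ε • κ j) := fun j =>
    (hκmom j).smul_measure hεT
  have hmomϱA : ∀ j, Integrable (fun x => ‖x‖) (ϱ.restrict (A j)) := fun j =>
    hϱmom.mono_measure Measure.restrict_le_self
  have hεκuniv : ∀ j, (ε • κ j) Set.univ = ε := by
    intro j
    simp only [Measure.smul_apply, smul_eq_mul, hκuniv j, mul_one]
  -- the coupling
  set γ : Measure ((EuclideanSpace ℝ (Fin n)) × (EuclideanSpace ℝ (Fin n))) :=
    ϱ.prod μ₀ + ∑ j, (ϱ.restrict (A j)).prod (ε • κ j) with hγ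
  -- sum of restrictions is ϱ
  have hrsum : ∑ j, ϱ.restrict (A j) = ϱ := by
    ext s hs
    rw [Measure.finset_sum_apply]
    simp_rw [Measure.restrict_apply hs]
    have : ∑ j, ϱ (s ∩ A j) = ∑' j, ϱ (s ∩ A j) := (tsum_fintype _).symm
    rw [this, ← measure_iUnion
      (fun i j hij => (hAdisj hij).mono Set.inter_subset_right Set.inter_subset_right)
      (fun j => hs.inter (hAmeas j))]
    rw [← Set.inter_iUnion, hAcover, Set.inter_univ]
  -- first marginal
  have hfst : γ.map Prod.fst = ϱ := by
    rw [hγ, Measure.map_add _ _ measurable_fst,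
      Statement1Aux.map_finset_sum' measurable_fst]
    have h1 : (ϱ.prod μ₀).map Prod.fst = (μ₀ Set.univ) • ϱ := Measure.map_fst_prod
    have h2 : ∀ j, ((ϱ.restrict (A j)).prod (ε • κ j)).map Prod.fst
        = ε • ϱ.restrict (A j) := by
      intro j
      haveI : IsFiniteMeasure (ε • κ j) := ⟨by rw [hεκuniv j]; exact hεT.lt_top⟩
      rw [Measure.map_fst_prod]
      haveI : IsProbabilityMeasure (κ j) := ⟨hκuniv j⟩
      congr 1
      simp only [Measure.smul_apply, smul_eq_mul, measure_univ, mul_one]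
    rw [h1]
    rw [Finset.sum_congr rfl (fun j _ => h2 j)]
    rw [← Finset.smul_sum, hrsum]
    have hν1 : ν Set.univ = ε := by
      rw [hν, Measure.finset_sum_apply]
      have : ∀ j, ((p j * ε) • κ j) Set.univ = p j * ε := by
        intro j
        haveI : IsProbabilityMeasure (κ j) := ⟨hκuniv j⟩
        simp only [Measure.smul_apply, smul_eq_mul, measure_univ, mul_one]
      rw [Finset.sum_congr rfl (fun j _ => this j), ← Finset.sum_mul, hpsum, one_mul]
    have hμ₀1 : μ₀ Set.univ + ε = 1 := by
      have := congrArg (fun m : Measure (EuclideanSpace ℝ (Fin n)) => m Set.univ) hμ₀add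
      simp only [Measure.add_apply] at this
      rw [hν1] at this
      rw [this, measure_univ]
    rw [← add_smul, hμ₀1, one_smul]
  -- second marginal
  have hsnd : γ.map Prod.snd = μ := by
    rw [hγ, Measure.map_add _ _ measurable_snd,
      Statement1Aux.map_finset_sum' measurable_snd]
    have h1 : (ϱ.prod μ₀).map Prod.snd = μ₀ := by
      rw [Measure.map_snd_prod, measure_univ, one_smul]
    have h2 : ∀ j, ((ϱ.restrict (A j)).prod (ε • κ j)).map Prod.snd
        = (p j * ε) • κ j := by
      intro j
      haveI : IsFiniteMeasure (ε • κ j) := ⟨by rw [hεκuniv j]; exact hεT.lt_top⟩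
      rw [Measure.map_snd_prod, Measure.restrict_apply_univ, smul_smul]
    rw [h1, Finset.sum_congr rfl (fun j _ => h2 j), ← hν, hμ₀add]
  -- integrability of the cost
  have hint1 : Integrable (fun q : (EuclideanSpace ℝ (Fin n)) × (EuclideanSpace ℝ (Fin n)) => ⟪q.1, q.2⟫) (ϱ.prod μ₀) :=
    Statement1Aux.integrable_inner_prod _ _ hϱmom hmomμ₀
  have hint2 : ∀ j, Integrable (fun q : (EuclideanSpace ℝ (Fin n)) × (EuclideanSpace ℝ (Fin n)) => ⟪q.1, q.2⟫)
      ((ϱ.restrict (A j)).prod (ε • κ j)) := by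
    intro j
    haveI : IsFiniteMeasure (ε • κ j) := ⟨by rw [hεκuniv j]; exact hεT.lt_top⟩
    exact Statement1Aux.integrable_inner_prod _ _ (hmomϱA j) (hmomεκ j)
  have hint : Integrable (fun q : (EuclideanSpace ℝ (Fin n)) × (EuclideanSpace ℝ (Fin n)) => ⟪q.1, q.2⟫) γ := by
    rw [hγ, integrable_add_measure]
    exact ⟨hint1, integrable_finset_sum_measure.mpr fun j _ => hint2 j⟩
  -- value of the first integral
  have hI1 : ∫ q, ⟪q.1, q.2⟫ ∂(ϱ.prod μ₀) = 0 := by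
    rw [integral_prod _ hint1]
    have h1 : ∀ x : (EuclideanSpace ℝ (Fin n)), ∫ y, ⟪x, y⟫ ∂μ₀ = ⟪x, ∫ y, y ∂μ₀⟫ := fun x =>
      integral_inner hidμ₀ x
    simp_rw [h1]
    have h2 : ∀ x : (EuclideanSpace ℝ (Fin n)), ⟪x, ∫ y, (y : (EuclideanSpace ℝ (Fin n))) ∂μ₀⟫ = ⟪(∫ y, (y : (EuclideanSpace ℝ (Fin n))) ∂μ₀ : (EuclideanSpace ℝ (Fin n))), x⟫ :=
      fun x => real_inner_comm _ _
    simp_rw [h2]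
    rw [integral_inner hidϱ, hϱbar, inner_zero_right]
  -- value of the other integrals
  have hI2 : ∀ j, ∫ q, ⟪q.1, q.2⟫ ∂((ϱ.restrict (A j)).prod (ε • κ j))
      = ε.toReal * ∫ x in A j, ⟪x, Statement1Aux.bary μ (S j)⟫ ∂ϱ := by
    intro j
    haveI : IsFiniteMeasure (ε • κ j) := ⟨by rw [hεκuniv j]; exact hεT.lt_top⟩
    have hidεκ : Integrable (fun y : (EuclideanSpace ℝ (Fin n)) => y) (ε • κ j) :=
      (integrable_norm_iff aestronglyMeasurable_id).mp (hmomεκ j)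
    rw [integral_prod _ (hint2 j)]
    have h1 : ∀ x : (EuclideanSpace ℝ (Fin n)), ∫ y, ⟪x, y⟫ ∂(ε • κ j) = ⟪x, ∫ y, y ∂(ε • κ j)⟫ := fun x =>
      integral_inner hidεκ x
    simp_rw [h1]
    have h2 : ∫ y, (y : (EuclideanSpace ℝ (Fin n))) ∂(ε • κ j) = ε.toReal • Statement1Aux.bary μ (S j) := by
      rw [integral_smul_measure, hκbar j]
    rw [h2]
    simp_rw [real_inner_smul_right]
    rw [integral_const_mul]
  -- integrability of inner products against ϱ
  have hwint : ∀ w : (EuclideanSpace ℝ (Fin n)), Integrable (fun x => ⟪x, w⟫) ϱ := by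
    intro w
    refine Integrable.mono' (hϱmom.mul_const ‖w‖)
      ((Continuous.inner continuous_id continuous_const).aestronglyMeasurable) ?_
    filter_upwards with x
    rw [Real.norm_eq_abs]
    exact abs_real_inner_le_norm _ _
  -- partition integrals
  have hpart : ∀ (f : (EuclideanSpace ℝ (Fin n)) → ℝ), Integrable f ϱ →
      ∑ j, ∫ x in A j, f x ∂ϱ = ∫ x, f x ∂ϱ := by
    intro f hf
    have hU : ⋃ j ∈ Finset.univ, A j = Set.univ := by
      simp only [Finset.mem_univ, Set.iUnion_true]
      exact hAcover
    rw [← MeasureTheory.integral_biUnion_finset Finset.univ (fun j _ => hAmeas j)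
      (by rw [Finset.coe_univ]; exact Set.pairwise_univ.mpr hAdisj)
      (fun i _ => hf.integrableOn)]
    rw [hU, Measure.restrict_univ]
  -- lower bound on the directional sum
  have hlow : c₀ * ∫ x, ‖x‖ ∂ϱ
      ≤ ∑ j, ∫ x in A j, ⟪x, Statement1Aux.bary μ (S j)⟫ ∂ϱ := by
    have hdec : ∀ j, ∫ x in A j, ⟪x, Statement1Aux.bary μ (S j)⟫ ∂ϱ
        = (∫ x in A j, ⟪x, Statement1Aux.bary μ (S j) - v⟫ ∂ϱ)
          + ∫ x in A j, ⟪x, v⟫ ∂ϱ := by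
      intro j
      rw [← integral_add ((hwint _).integrableOn) ((hwint v).integrableOn)]
      congr 1
      ext x
      rw [inner_sub_right]
      ring
    rw [Finset.sum_congr rfl (fun j _ => hdec j), Finset.sum_add_distrib]
    have hv0 : ∑ j, ∫ x in A j, ⟪x, v⟫ ∂ϱ = 0 := by
      rw [hpart _ (hwint v)]
      have : ∀ x : (EuclideanSpace ℝ (Fin n)), ⟪x, v⟫ = ⟪v, x⟫ := fun x => real_inner_comm _ _
      simp_rw [this]
      rw [integral_inner hidϱ, hϱbar, inner_zero_right]
    rw [hv0, add_zero]
    have hterm : ∀ j, c₀ * ∫ x in A j, ‖x‖ ∂ϱ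
        ≤ ∫ x in A j, ⟪x, Statement1Aux.bary μ (S j) - v⟫ ∂ϱ := by
      intro j
      rw [← integral_const_mul]
      refine setIntegral_mono_on ((hϱmom.const_mul c₀).integrableOn)
        ((hwint _).integrableOn) (hAmeas j) ?_
      intro x hx
      exact hAsub j hx
    calc c₀ * ∫ x, ‖x‖ ∂ϱ = c₀ * ∑ j, ∫ x in A j, ‖x‖ ∂ϱ := by rw [hpart _ hϱmom]
      _ = ∑ j, c₀ * ∫ x in A j, ‖x‖ ∂ϱ := by rw [Finset.mul_sum]
      _ ≤ ∑ j, ∫ x in A j, ⟪x, Statement1Aux.bary μ (S j) - v⟫ ∂ϱ :=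
          Finset.sum_le_sum fun j _ => hterm j
  -- total integral bound
  have htotal : (ε.toReal * c₀) * ∫ x, ‖x‖ ∂ϱ ≤ ∫ q, ⟪q.1, q.2⟫ ∂γ := by
    have hIγ : ∫ q, ⟪q.1, q.2⟫ ∂γ
        = ε.toReal * ∑ j, ∫ x in A j, ⟪x, Statement1Aux.bary μ (S j)⟫ ∂ϱ := by
      rw [hγ, integral_add_measure hint1 (integrable_finset_sum_measure.mpr
        fun j _ => hint2 j)]
      rw [integral_finset_sum_measure (fun j _ => hint2 j)]
      rw [hI1, zero_add, Finset.sum_congr rfl (fun j _ => hI2 j), ← Finset.mul_sum]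
    rw [hIγ, mul_assoc]
    exact mul_le_mul_of_nonneg_left hlow ENNReal.toReal_nonneg
  -- conclude via the supremum
  calc ((ε.toReal * c₀ * ∫ x, ‖x‖ ∂ϱ : ℝ) : EReal)
      ≤ ((∫ q, ⟪q.1, q.2⟫ ∂γ : ℝ) : EReal) := EReal.coe_le_coe_iff.mpr htotal
    _ ≤ Tcorr ϱ μ := by
        rw [Tcorr]
        exact le_iSup_of_le γ (le_iSup_of_le ⟨hfst, hsnd, hint⟩ le_rfl)
end
end

section
/- Let −1/n < α < 0 and f = (1 − αφ)^{1/α} ∈ C_α^+(ℝⁿ). For t > 0 define f̄_t(x) = (1 − α(1+t) φ(x/(1+t)))^{1/α} (this is the α-combination f ⊕_α t ·_α f). Then the limit lim_{t→0⁺} (∫_{ℝⁿ} f̄_t(x) dx − ∫_{ℝⁿ} f(x) dx)/t exists, is finite, and equals n ∫_{ℝⁿ} f(x) dx − ∫_{ℝⁿ} φ(x) f(x)^{1−α} dx, where the integrand φ(x) f(x)^{1−α} = φ(x)(1 − αφ(x))^{1/α − 1} is taken to be 0 at points with φ(x) = +∞. -/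
noncomputable section

open MeasureTheory Filter Real
open scoped ENNReal RealInnerProductSpace Topology Pointwise

/-- MVT estimate for negative-power rpow. -/
lemma aux_abs_rpow_sub_le {β A u : ℝ} (hβ : β < 0) (hA : 1 ≤ A) (hu : 0 ≤ u) :
    |(A + u) ^ β - A ^ β| ≤ (-β) * A ^ (β - 1) * u := by
  have hA0 : (0 : ℝ) < A := lt_of_lt_of_le one_pos hA
  have hderiv : ∀ s ∈ Set.Icc (0 : ℝ) u, HasDerivWithinAt (fun s : ℝ => (A + s) ^ β)
      (1 * β * (A + s) ^ (β - 1)) (Set.Icc 0 u) s := by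
    intro s hs
    have h1 : HasDerivAt (fun s : ℝ => A + s) 1 s := (hasDerivAt_id s).const_add A
    have hne : A + s ≠ 0 := by nlinarith [hs.1]
    exact (h1.rpow_const (Or.inl hne)).hasDerivWithinAt
  have hbound : ∀ s ∈ Set.Ico (0 : ℝ) u, ‖1 * β * (A + s) ^ (β - 1)‖ ≤ (-β) * A ^ (β - 1) := by
    intro s hs
    have hpos : (0:ℝ) < A + s := by nlinarith [hs.1]
    have h1 : (A + s) ^ (β - 1) ≤ A ^ (β - 1) :=
      Real.rpow_le_rpow_of_nonpos hA0 (by linarith [hs.1]) (by linarith)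
    have h2 : (0:ℝ) ≤ (A + s) ^ (β - 1) := Real.rpow_nonneg hpos.le _
    rw [one_mul, norm_mul, Real.norm_eq_abs, Real.norm_eq_abs, abs_of_neg hβ,
      abs_of_nonneg h2]
    exact mul_le_mul_of_nonneg_left h1 (by linarith)
  have := norm_image_sub_le_of_norm_deriv_le_segment' hderiv hbound u
    (Set.right_mem_Icc.2 hu)
  simpa [Real.norm_eq_abs] using this

set_option maxHeartbeats 1000000 in
theorem statement2 {n : ℕ} (α : ℝ) (hα1 : -(1 / (n : ℝ)) < α) (hα0 : α < 0)
    (φ : EuclideanSpace ℝ (Fin n) → EReal)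
    (hproper : ∃ x, φ x ≠ ⊤)
    (hconv : ERealConvexOn φ)
    (hlsc : LowerSemicontinuous φ)
    (hnonneg : ∀ x, 0 ≤ φ x)
    (hcoer : ERealCoercive φ) :
    Tendsto (fun t : ℝ =>
        ((∫ x, acFn α (fun y => ((1 + t : ℝ) : EReal) * φ ((1 + t)⁻¹ • y)) x ∂volume)
          - ∫ x, acFn α φ x ∂volume) / t)
      (𝓝[>] (0 : ℝ))
      (𝓝 ((n : ℝ) * (∫ x, acFn α φ x ∂volume) -
        ∫ x, (if φ x = ⊤ then 0
          else (φ x).toReal * (1 - α * (φ x).toReal) ^ (1 / α - 1)) ∂volume)) := by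
  classical
  have hαne : α ≠ 0 := ne_of_lt hα0
  have hαpos : (0:ℝ) < -α := by linarith
  have hβ : 1 / α < 0 := one_div_neg.2 hα0
  -- basic facts about φ
  have hp_nonneg : ∀ x, 0 ≤ (φ x).toReal := by
    intro x
    by_cases h : φ x = ⊤
    · simp [h]
    · have := EReal.toReal_le_toReal (hnonneg x) (by simp) h
      simpa using this
  -- notation
  set f : EuclideanSpace ℝ (Fin n) → ℝ := acFn α φ with hf_def
  set g : ℝ → EuclideanSpace ℝ (Fin n) → ℝ := fun t y =>
    if φ y = ⊤ then 0 else (1 - α * ((1 + t) * (φ y).toReal)) ^ (1 / α) with hg_def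
  set q : EuclideanSpace ℝ (Fin n) → ℝ := fun y =>
    if φ y = ⊤ then 0 else (φ y).toReal * (1 - α * (φ y).toReal) ^ (1 / α - 1) with hq_def
  have hg0 : g 0 = f := by
    funext y; simp [hg_def, hf_def, acFn]
  -- measurability
  have hφm : Measurable φ := hlsc.measurable
  have htop : MeasurableSet {y : EuclideanSpace ℝ (Fin n) | φ y = ⊤} := hφm (measurableSet_singleton ⊤)
  have hpm : Measurable fun y : EuclideanSpace ℝ (Fin n) => (φ y).toReal := hφm.ereal_toReal
  have hbase_meas : ∀ t : ℝ, Measurable fun y : EuclideanSpace ℝ (Fin n) => 1 - α * ((1 + t) * (φ y).toReal) := by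
    intro t
    exact measurable_const.sub (((hpm.const_mul (1 + t)).const_mul α))
  have hbase_ge : ∀ t : ℝ, 0 ≤ t → ∀ y : EuclideanSpace ℝ (Fin n), 1 ≤ 1 - α * ((1 + t) * (φ y).toReal) := by
    intro t ht y
    nlinarith [hp_nonneg y, mul_nonneg ht (hp_nonneg y)]
  have h_rpow_meas : ∀ {b : EuclideanSpace ℝ (Fin n) → ℝ}, Measurable b → (∀ y, 1 ≤ b y) → ∀ p : ℝ,
      Measurable fun y => b y ^ p := by
    intro b hb hb1 p
    have : (fun y => b y ^ p) = fun y => Real.exp (Real.log (b y) * p) := by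
      funext y
      exact Real.rpow_def_of_pos (lt_of_lt_of_le one_pos (hb1 y)) p
    rw [this]
    exact Real.measurable_exp.comp ((Real.measurable_log.comp hb).mul_const p)
  have hgm : ∀ t : ℝ, 0 ≤ t → Measurable (g t) := by
    intro t ht
    exact Measurable.ite htop measurable_const
      (h_rpow_meas (hbase_meas t) (hbase_ge t ht) _)
  have hfm : Measurable f := by rw [← hg0]; exact hgm 0 le_rfl
  have hqm : Measurable q := by
    apply Measurable.ite htop measurable_const
    exact hpm.mul (h_rpow_meas (by simpa using hbase_meas 0) (by simpa using hbase_ge 0 le_rfl) _)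
  -- pointwise bounds
  have hf_nonneg : ∀ y, 0 ≤ f y := by
    intro y
    by_cases h : φ y = ⊤
    · simp [hf_def, acFn, h]
    · simp only [hf_def, acFn, h, if_neg, if_false]
      exact Real.rpow_nonneg (by nlinarith [hp_nonneg y]) _
  have hq_nonneg : ∀ y, 0 ≤ q y := by
    intro y
    by_cases h : φ y = ⊤
    · simp [hq_def, h]
    · simp only [hq_def, h, if_neg, if_false]
      exact mul_nonneg (hp_nonneg y) (Real.rpow_nonneg (by nlinarith [hp_nonneg y]) _)
  have hg_nonneg : ∀ t : ℝ, 0 ≤ t → ∀ y, 0 ≤ g t y := by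
    intro t ht y
    by_cases h : φ y = ⊤
    · simp [hg_def, h]
    · simp only [hg_def, h, if_neg, if_false]
      exact Real.rpow_nonneg (by linarith [hbase_ge t ht y]) _
  have hg_le_f : ∀ t : ℝ, 0 ≤ t → ∀ y, g t y ≤ f y := by
    intro t ht y
    by_cases h : φ y = ⊤
    · simp [hg_def, hf_def, acFn, h]
    · simp only [hg_def, hf_def, acFn, h, if_neg]
      have h1 : (0:ℝ) < 1 - α * (φ y).toReal := by nlinarith [hp_nonneg y]
      apply Real.rpow_le_rpow_of_nonpos h1 _ hβ.le
      nlinarith [mul_nonneg ht (hp_nonneg y)]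
  have hf_le_one : ∀ y, f y ≤ 1 := by
    intro y
    by_cases h : φ y = ⊤
    · simp [hf_def, acFn, h]
    · simp only [hf_def, acFn, h, if_neg]
      exact Real.rpow_le_one_of_one_le_of_nonpos (by nlinarith [hp_nonneg y]) hβ.le
  -- q ≤ (-α)⁻¹ f
  have hq_le : ∀ y, q y ≤ (-α)⁻¹ * f y := by
    intro y
    by_cases h : φ y = ⊤
    · simp [hq_def, hf_def, acFn, h]
    · simp only [hq_def, hf_def, acFn, h, if_neg]
      set p := (φ y).toReal with hp
      have hp0 : 0 ≤ p := hp_nonneg y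
      have hA : (1:ℝ) ≤ 1 - α * p := by nlinarith
      have hA0 : (0:ℝ) < 1 - α * p := by linarith
      have hsplit : (1 - α * p) ^ (1 / α) = (1 - α * p) ^ (1 / α - 1) * (1 - α * p) := by
        rw [← Real.rpow_add_one hA0.ne' (1 / α - 1)]; ring_nf
      rw [hsplit]
      have hple : p ≤ (-α)⁻¹ * (1 - α * p) := by
        rw [inv_mul_eq_div, le_div_iff₀ hαpos]
        nlinarith
      have hr0 : (0:ℝ) ≤ (1 - α * p) ^ (1 / α - 1) := Real.rpow_nonneg hA0.le _
      calc p * (1 - α * p) ^ (1 / α - 1)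
          ≤ ((-α)⁻¹ * (1 - α * p)) * (1 - α * p) ^ (1 / α - 1) :=
            mul_le_mul_of_nonneg_right hple hr0
        _ = (-α)⁻¹ * ((1 - α * p) ^ (1 / α - 1) * (1 - α * p)) := by ring
  -- integrability of f
  obtain ⟨c, hc, hev⟩ := hcoer
  rw [Filter.eventually_comap] at hev
  rw [Filter.eventually_atTop] at hev
  obtain ⟨R, hR⟩ := hev
  have hRx : ∀ x : EuclideanSpace ℝ (Fin n), R ≤ ‖x‖ → ((c * ‖x‖ : ℝ) : EReal) ≤ φ x := fun x hx =>
    hR ‖x‖ hx x rfl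
  set R' : ℝ := max R 0 with hR'
  set m : ℝ := min 1 ((-α) * c) with hm_def
  have hm : 0 < m := lt_min one_pos (by positivity)
  have hm1 : m ≤ 1 := min_le_left _ _
  set K : ℝ := max ((1 + R') ^ (-(1 / α))) (m ^ (1 / α)) with hK_def
  have hK : 0 < K := lt_of_lt_of_le (Real.rpow_pos_of_pos hm _) (le_max_right _ _)
  have hfK : ∀ x : EuclideanSpace ℝ (Fin n), f x ≤ K * (1 + ‖x‖) ^ (1 / α) := by
    intro x
    have hx0 : (0:ℝ) ≤ ‖x‖ := norm_nonneg x
    rcases le_or_gt R' ‖x‖ with hcase | hcase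
    · by_cases h : φ x = ⊤
      · have h0 : (0:ℝ) ≤ K * (1 + ‖x‖) ^ (1 / α) :=
          mul_nonneg hK.le (Real.rpow_nonneg (by positivity) _)
        simpa [hf_def, acFn, h] using h0
      · simp only [hf_def, acFn, h, if_neg]
        have hple : c * ‖x‖ ≤ (φ x).toReal := by
          have h1 := hRx x (le_trans (le_max_left _ _) hcase)
          have h2 := EReal.toReal_le_toReal h1 (EReal.coe_ne_bot _) h
          rwa [EReal.toReal_coe] at h2
        have hA : m * (1 + ‖x‖) ≤ 1 - α * (φ x).toReal := by
          have h1 : m ≤ (-α) * c := min_le_right _ _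
          nlinarith [hp_nonneg x]
        have hApos : (0:ℝ) < m * (1 + ‖x‖) := by positivity
        calc (1 - α * (φ x).toReal) ^ (1 / α)
            ≤ (m * (1 + ‖x‖)) ^ (1 / α) :=
              Real.rpow_le_rpow_of_nonpos hApos hA hβ.le
          _ = m ^ (1 / α) * (1 + ‖x‖) ^ (1 / α) := Real.mul_rpow hm.le (by linarith)
          _ ≤ K * (1 + ‖x‖) ^ (1 / α) :=
              mul_le_mul_of_nonneg_right (le_max_right _ _) (Real.rpow_nonneg (by linarith) _)
    · have h1 : f x ≤ 1 := hf_le_one x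
      have h2 : (1 + R') ^ (1 / α) ≤ (1 + ‖x‖) ^ (1 / α) :=
        Real.rpow_le_rpow_of_nonpos (by linarith) (by linarith) hβ.le
      have h3 : (1:ℝ) ≤ K * (1 + ‖x‖) ^ (1 / α) := by
        have hR'0 : (0:ℝ) ≤ R' := le_max_right _ _
        have h4 : (1 + R') ^ (-(1 / α)) * (1 + R') ^ (1 / α) = 1 := by
          rw [← Real.rpow_add (by linarith)]; simp
        calc (1:ℝ) = (1 + R') ^ (-(1 / α)) * (1 + R') ^ (1 / α) := h4.symm
          _ ≤ K * (1 + ‖x‖) ^ (1 / α) := by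
              apply mul_le_mul (le_max_left _ _) h2 (Real.rpow_nonneg (by linarith) _) hK.le
      linarith
  have hn_lt : (n : ℝ) < -(1 / α) := by
    rcases Nat.eq_zero_or_pos n with hn | hn
    · exfalso; rw [hn] at hα1; norm_num at hα1; linarith
    · have hn0 : (0:ℝ) < n := by exact_mod_cast hn
      have h1 : -α < 1 / (n:ℝ) := by linarith
      have h2 : (-α) * n < 1 := by
        calc (-α) * n < (1 / (n:ℝ)) * n := mul_lt_mul_of_pos_right h1 hn0
          _ = 1 := by field_simp
      have h3 : (n:ℝ) < 1 / (-α) := by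
        rw [lt_div_iff₀ hαpos]; nlinarith
      calc (n:ℝ) < 1 / (-α) := h3
        _ = -(1 / α) := by field_simp
  have h_int_bound : Integrable (fun x : EuclideanSpace ℝ (Fin n) => K * (1 + ‖x‖) ^ (1 / α)) volume := by
    have hr : ((Module.finrank ℝ (EuclideanSpace ℝ (Fin n)) : ℝ)) < -(1 / α) := by
      rw [show Module.finrank ℝ (EuclideanSpace ℝ (Fin n)) = n from finrank_euclideanSpace_fin]
      exact hn_lt
    have := (integrable_one_add_norm (E := EuclideanSpace ℝ (Fin n)) (μ := volume) hr).const_mul K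
    simpa [Real.rpow_neg] using this
  have hφ_ne_bot : ∀ x, φ x ≠ ⊥ := fun x hb => by
    have := hnonneg x; rw [hb] at this; simp at this
  have hf_int : Integrable f volume :=
    h_int_bound.mono' hfm.aestronglyMeasurable
      (Filter.Eventually.of_forall fun x => by
        rw [Real.norm_eq_abs, abs_of_nonneg (hf_nonneg x)]; exact hfK x)
  have hq_int : Integrable q volume :=
    (hf_int.const_mul ((-α)⁻¹)).mono' hqm.aestronglyMeasurable
      (Filter.Eventually.of_forall fun x => by
        rw [Real.norm_eq_abs, abs_of_nonneg (hq_nonneg x)]; exact hq_le x)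
  have hg_int : ∀ t : ℝ, 0 ≤ t → Integrable (g t) volume := fun t ht =>
    hf_int.mono' (hgm t ht).aestronglyMeasurable
      (Filter.Eventually.of_forall fun x => by
        rw [Real.norm_eq_abs, abs_of_nonneg (hg_nonneg t ht x)]; exact hg_le_f t ht x)
  -- slope bound via MVT
  have hslope_bound : ∀ t : ℝ, 0 < t → ∀ y, |g t y - g 0 y| ≤ q y * t := by
    intro t ht y
    by_cases h : φ y = ⊤
    · simp [hg_def, hq_def, h]
    · have hp0 : 0 ≤ (φ y).toReal := hp_nonneg y
      set p := (φ y).toReal with hp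
      have hA : (1:ℝ) ≤ 1 - α * p := by nlinarith
      have hu : (0:ℝ) ≤ (-α) * p * t := mul_nonneg (mul_nonneg hαpos.le hp0) ht.le
      have key := aux_abs_rpow_sub_le hβ hA hu
      have egt : g t y = ((1 - α * p) + (-α) * p * t) ^ (1/α) := by
        simp only [hg_def, if_neg h]; congr 1; ring
      have eg0 : g 0 y = (1 - α * p) ^ (1/α) := by
        simp only [hg_def, if_neg h]; congr 1; ring
      have eq' : q y = p * (1 - α * p) ^ (1/α - 1) := by
        simp only [hq_def, if_neg h]; rfl
      rw [egt, eg0, eq']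
      calc |((1 - α * p) + (-α) * p * t) ^ (1/α) - (1 - α * p) ^ (1/α)|
          ≤ (-(1/α)) * (1 - α * p) ^ (1/α - 1) * ((-α) * p * t) := key
        _ = p * (1 - α * p) ^ (1/α - 1) * t := by field_simp
  -- pointwise derivative
  have hpt : ∀ y, Tendsto (fun t : ℝ => (g t y - g 0 y) / t) (𝓝[>] 0) (𝓝 (-(q y))) := by
    intro y
    by_cases h : φ y = ⊤
    · have h1 : (fun t : ℝ => (g t y - g 0 y)/t) = fun _ => (0:ℝ) := by
        funext t; simp [hg_def, h]
      have h2 : -(q y) = 0 := by simp [hq_def, h]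
      rw [h1, h2]; exact tendsto_const_nhds
    · have hp0 : 0 ≤ (φ y).toReal := hp_nonneg y
      set p := (φ y).toReal with hp
      have hA0 : (0:ℝ) < 1 - α * p := by nlinarith
      have hg_eq : ∀ t : ℝ, g t y = ((1 - α * p) + (-α * p) * t) ^ (1/α) := by
        intro t; simp only [hg_def, if_neg h]; congr 1; ring
      have hbase : HasDerivAt (fun t : ℝ => (1 - α * p) + (-α * p) * t) (-α * p) 0 := by
        simpa using (((hasDerivAt_id (0:ℝ)).const_mul (-α * p)).const_add (1 - α * p))
      have hcomp := hbase.rpow_const (p := 1/α)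
        (Or.inl (by simpa using hA0.ne'))
      have hval : (-α * p) * (1/α) * ((1 - α * p) + (-α * p) * 0) ^ (1/α - 1) = -(q y) := by
        simp only [hq_def, if_neg h, mul_zero, add_zero, ← hp]
        field_simp
      rw [hval] at hcomp
      have hslope := hasDerivAt_iff_tendsto_slope.1 hcomp
      have hmono : 𝓝[>] (0:ℝ) ≤ 𝓝[≠] (0:ℝ) :=
        nhdsWithin_mono _ fun x hx => ne_of_gt hx
      refine (hslope.mono_left hmono).congr' ?_
      filter_upwards [self_mem_nhdsWithin] with t ht
      have ht0 : t ≠ 0 := ne_of_gt ht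
      rw [slope_def_field, hg_eq t, hg_eq 0]
      simp [div_eq_div_iff]
  -- dominated convergence
  have hDCT : Tendsto (fun t : ℝ => ∫ x, (g t x - g 0 x)/t ∂volume) (𝓝[>] (0:ℝ))
      (𝓝 (∫ x, -(q x) ∂volume)) := by
    apply tendsto_integral_filter_of_dominated_convergence q
    · filter_upwards [self_mem_nhdsWithin] with t ht
      exact (((hgm t (le_of_lt ht)).sub (hgm 0 le_rfl)).div_const t).aestronglyMeasurable
    · filter_upwards [self_mem_nhdsWithin] with t ht
      apply Filter.Eventually.of_forall; intro x
      rw [norm_div, Real.norm_eq_abs, Real.norm_eq_abs, abs_of_pos (show (0:ℝ) < t from ht), div_le_iff₀ (show (0:ℝ) < t from ht)]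
      exact hslope_bound t ht x
    · exact hq_int
    · exact Filter.Eventually.of_forall hpt
  rw [integral_neg] at hDCT
  have hGint : ∀ t : ℝ, 0 < t → (∫ x, (g t x - g 0 x)/t ∂volume)
      = ((∫ x, g t x ∂volume) - ∫ x, g 0 x ∂volume)/t := by
    intro t ht
    rw [integral_div, integral_sub (hg_int t ht.le) (hg_int 0 le_rfl)]
  have hDCT2 : Tendsto (fun t : ℝ => ((∫ x, g t x ∂volume) - ∫ x, g 0 x ∂volume)/t)
      (𝓝[>] (0:ℝ)) (𝓝 (-(∫ x, q x ∂volume))) := by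
    refine hDCT.congr' ?_
    filter_upwards [self_mem_nhdsWithin] with t ht
    exact hGint t ht
  -- change of variables
  have hCOV : ∀ t : ℝ, 0 < t →
      (∫ x, acFn α (fun y => ((1 + t : ℝ) : EReal) * φ ((1 + t)⁻¹ • y)) x ∂volume)
        = (1 + t)^n * ∫ x, g t x ∂volume := by
    intro t ht
    have h1t : (0:ℝ) < 1 + t := by linarith
    have hfun : ∀ x, acFn α (fun y => ((1 + t : ℝ) : EReal) * φ ((1 + t)⁻¹ • y)) x
        = g t ((1 + t)⁻¹ • x) := by
      intro x
      by_cases h : φ ((1 + t)⁻¹ • x) = ⊤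
      · have htop' : ((1 + t : ℝ) : EReal) * φ ((1 + t)⁻¹ • x) = ⊤ := by
          rw [h]; exact EReal.coe_mul_top_of_pos h1t
        simp only [acFn, hg_def]
        rw [if_pos htop', if_pos h]
      · have hcoe : φ ((1 + t)⁻¹ • x) = (((φ ((1 + t)⁻¹ • x)).toReal : ℝ) : EReal) :=
          (EReal.coe_toReal h (hφ_ne_bot _)).symm
        have hne : ((1 + t : ℝ) : EReal) * φ ((1 + t)⁻¹ • x) ≠ ⊤ := by
          rw [hcoe, ← EReal.coe_mul]; exact EReal.coe_ne_top _
        simp only [acFn, hg_def]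
        rw [if_neg hne, if_neg h, EReal.toReal_mul, EReal.toReal_coe]
    calc (∫ x, acFn α (fun y => ((1 + t : ℝ) : EReal) * φ ((1 + t)⁻¹ • y)) x ∂volume)
        = ∫ x, g t ((1 + t)⁻¹ • x) ∂volume := by
          exact integral_congr_ae (Filter.Eventually.of_forall hfun)
      _ = |(((1 + t)⁻¹) ^ (Module.finrank ℝ (EuclideanSpace ℝ (Fin n))))⁻¹| •
            ∫ x, g t x ∂volume := Measure.integral_comp_smul volume (g t) ((1 + t)⁻¹)
      _ = (1 + t)^n * ∫ x, g t x ∂volume := by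
          rw [finrank_euclideanSpace_fin, smul_eq_mul]
          congr 1
          rw [← inv_pow, inv_inv, abs_of_pos (pow_pos h1t n)]
  -- elementary limits
  have L1 : Tendsto (fun t : ℝ => ((1 + t)^n : ℝ)) (𝓝[>] (0:ℝ)) (𝓝 1) := by
    have h1 : Tendsto (fun t : ℝ => ((1 + t)^n : ℝ)) (𝓝 0) (𝓝 ((1 + 0)^n)) :=
      ((continuous_const.add continuous_id).pow n).tendsto 0
    have h2 := h1.mono_left (nhdsWithin_le_nhds (s := Set.Ioi (0:ℝ)))
    simpa using h2
  have L2 : Tendsto (fun t : ℝ => (((1 + t)^n : ℝ) - 1)/t) (𝓝[>] (0:ℝ)) (𝓝 (n : ℝ)) := by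
    have hD : HasDerivAt (fun t : ℝ => ((1 + t)^n : ℝ)) ((n : ℝ)) 0 := by
      have := ((hasDerivAt_id (0:ℝ)).const_add (1:ℝ)).fun_pow n
      simpa using this
    have hslope := hasDerivAt_iff_tendsto_slope.1 hD
    have hmono : 𝓝[>] (0:ℝ) ≤ 𝓝[≠] (0:ℝ) :=
      nhdsWithin_mono _ fun x hx => ne_of_gt hx
    refine (hslope.mono_left hmono).congr' ?_
    filter_upwards [self_mem_nhdsWithin] with t ht
    rw [slope_def_field]
    norm_num
  -- assemble
  have hmain : Tendsto (fun t : ℝ =>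
      ((1 + t)^n : ℝ) * (((∫ x, g t x ∂volume) - ∫ x, g 0 x ∂volume)/t)
        + ((((1 + t)^n : ℝ) - 1)/t) * (∫ x, g 0 x ∂volume))
      (𝓝[>] (0:ℝ))
      (𝓝 (1 * (-(∫ x, q x ∂volume)) + (n : ℝ) * (∫ x, g 0 x ∂volume))) :=
    (L1.mul hDCT2).add (L2.mul_const _)
  have hval : 1 * (-(∫ x, q x ∂volume)) + (n : ℝ) * (∫ x, g 0 x ∂volume)
      = (n : ℝ) * (∫ x, f x ∂volume) - ∫ x, q x ∂volume := by
    rw [hg0]; ring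
  rw [hval] at hmain
  refine hmain.congr' ?_
  filter_upwards [self_mem_nhdsWithin] with t ht
  have ht0 : t ≠ 0 := ne_of_gt ht
  rw [hCOV t ht, hg0]
  field_simp
  ring
end
end

section
/- Let −1/n < α < 0, let β₁ ≥ 0 and β₂ ∈ ℝ be constants, and let f = (1 − αφ)^{1/α} ∈ C_α^+(ℝⁿ) with the origin in the interior of K_f. For t > 0 define f̂_t(x) = (1 − α(1+β₁t) φ(x/(1+β₁t)) + αβ₂ t)^{1/α}; then f̂_t is well-defined for all sufficiently small t > 0 (its base exceeds 1/α), and lim_{t→0⁺} ∫_{ℝⁿ} (f̂_t(x) − f(x))/t dx = β₂ ∫_{ℝⁿ} f(x)^{1−α} dx + β₁ ( n ∫_{ℝⁿ} f(x) dx − ∫_{ℝⁿ} φ(x) f(x)^{1−α} dx ), and this quantity is finite. Here φ(x) f(x)^{1−α} is taken to be 0 where φ(x) = +∞. -/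
noncomputable section

open MeasureTheory Filter Real
open scoped ENNReal RealInnerProductSpace Topology Pointwise

/-- The perturbed function `f̂_t(x) = (1 - α(1+β₁t)φ(x/(1+β₁t)) + αβ₂t)^{1/α}`,
equal to `0` where `φ(x/(1+β₁t)) = +∞`. -/
def fhat {n : ℕ} (α β₁ β₂ : ℝ) (φ : EuclideanSpace ℝ (Fin n) → EReal)
    (t : ℝ) (x : EuclideanSpace ℝ (Fin n)) : ℝ :=
  if φ ((1 + β₁ * t)⁻¹ • x) = ⊤ then 0
  else (1 - α * ((1 + β₁ * t) * (φ ((1 + β₁ * t)⁻¹ • x)).toReal) + α * β₂ * t) ^ (1 / α)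

/-- Auxiliary: the "unscaled" perturbation. -/
def gfun {n : ℕ} (α β₁ β₂ : ℝ) (φ : EuclideanSpace ℝ (Fin n) → EReal)
    (t : ℝ) (y : EuclideanSpace ℝ (Fin n)) : ℝ :=
  if φ y = ⊤ then 0
  else (1 - α * (φ y).toReal - (α * β₁ * (φ y).toReal - α * β₂) * t) ^ (1 / α)

lemma gfun_zero {n : ℕ} (α β₁ β₂ : ℝ) (φ : EuclideanSpace ℝ (Fin n) → EReal) :
    gfun α β₁ β₂ φ 0 = acFn α φ := by
  funext y
  by_cases hy : φ y = ⊤ <;> simp [gfun, acFn, hy]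

lemma fhat_smul {n : ℕ} (α β₁ β₂ : ℝ) (φ : EuclideanSpace ℝ (Fin n) → EReal)
    (t : ℝ) (ht : 0 < 1 + β₁ * t) (y : EuclideanSpace ℝ (Fin n)) :
    fhat α β₁ β₂ φ t ((1 + β₁ * t) • y) = gfun α β₁ β₂ φ t y := by
  unfold fhat gfun
  rw [smul_smul, inv_mul_cancel₀ (ne_of_gt ht), one_smul]
  by_cases hy : φ y = ⊤
  · simp [hy]
  · simp only [if_neg hy]
    congr 1
    ring

lemma aux_integrable_decay {n : ℕ} {h : EuclideanSpace ℝ (Fin n) → ℝ}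
    (hm : AEStronglyMeasurable h volume) {r C M : ℝ} (hr : (n : ℝ) < r)
    (h1 : ∀ x, |h x| ≤ 1) (h2 : ∀ x, M ≤ ‖x‖ → |h x| ≤ C * (1 + ‖x‖) ^ (-r)) :
    Integrable h (volume : Measure (EuclideanSpace ℝ (Fin n))) := by
  have hr' : (Module.finrank ℝ (EuclideanSpace ℝ (Fin n)) : ℝ) < r := by
    rwa [finrank_euclideanSpace_fin]
  have hrpos : 0 < r := lt_of_le_of_lt (Nat.cast_nonneg n) hr
  set M' : ℝ := max M 0 with hM'
  set C' : ℝ := max C ((1 + M') ^ r) with hC'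
  have hbase : Integrable (fun x : EuclideanSpace ℝ (Fin n) => (1 + ‖x‖) ^ (-r)) volume :=
    integrable_one_add_norm hr'
  refine (hbase.const_mul C').mono' hm ?_
  filter_upwards with x
  rcases le_or_gt M ‖x‖ with hx | hx
  · refine (h2 x hx).trans ?_
    have : (0:ℝ) ≤ (1 + ‖x‖) ^ (-r) := rpow_nonneg (by positivity) _
    exact mul_le_mul_of_nonneg_right (le_max_left _ _) this
  · have hxM : ‖x‖ ≤ M' := le_max_of_le_left hx.le
    have hpow : (1:ℝ) ≤ (1 + M') ^ r * (1 + ‖x‖) ^ (-r) := by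
      have h1x : (0:ℝ) < 1 + ‖x‖ := by positivity
      have hle : (1 + ‖x‖) ^ r ≤ (1 + M') ^ r :=
        rpow_le_rpow (by positivity) (by linarith) hrpos.le
      have hrn : (1 + ‖x‖) ^ (-r) = ((1 + ‖x‖) ^ r)⁻¹ := by
        rw [rpow_neg h1x.le]
      rw [hrn, ← div_eq_mul_inv, le_div_iff₀ (by positivity)]
      simpa using hle
    calc |h x| ≤ 1 := h1 x
      _ ≤ (1 + M') ^ r * (1 + ‖x‖) ^ (-r) := hpow
      _ ≤ C' * (1 + ‖x‖) ^ (-r) :=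
          mul_le_mul_of_nonneg_right (le_max_right _ _) (rpow_nonneg (by positivity) _)

set_option maxHeartbeats 2000000 in
theorem statement3 {n : ℕ} (α : ℝ) (hα1 : -(1 / (n : ℝ)) < α) (hα0 : α < 0)
    (β₁ β₂ : ℝ) (hβ₁ : 0 ≤ β₁)
    (φ : EuclideanSpace ℝ (Fin n) → EReal)
    (hproper : ∃ x, φ x ≠ ⊤)
    (hconv : ERealConvexOn φ)
    (hlsc : LowerSemicontinuous φ)
    (hnonneg : ∀ x, 0 ≤ φ x)
    (hcoer : ERealCoercive φ)
    (ho : (0 : EuclideanSpace ℝ (Fin n)) ∈ interior (closure {x | φ x ≠ ⊤})) :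
    (∃ t₀ > (0 : ℝ), ∀ t ∈ Set.Ioo (0 : ℝ) t₀, ∀ x : EuclideanSpace ℝ (Fin n),
      φ ((1 + β₁ * t)⁻¹ • x) ≠ ⊤ →
        0 < 1 - α * ((1 + β₁ * t) * (φ ((1 + β₁ * t)⁻¹ • x)).toReal) + α * β₂ * t) ∧
    Tendsto (fun t : ℝ =>
        ((∫ x, fhat α β₁ β₂ φ t x ∂volume) - ∫ x, acFn α φ x ∂volume) / t)
      (𝓝[>] (0 : ℝ))
      (𝓝 (β₂ * (∫ x, acFn α φ x ^ (1 - α) ∂volume) +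
        β₁ * ((n : ℝ) * (∫ x, acFn α φ x ∂volume) -
          ∫ x, (if φ x = ⊤ then 0
            else (φ x).toReal * (1 - α * (φ x).toReal) ^ (1 / α - 1)) ∂volume))) := by
  classical
  -- basic numeric facts
  have hαne : α ≠ 0 := ne_of_lt hα0
  have hnα : (0:ℝ) < -α := by linarith
  have hia : 1/α < 0 := div_neg_of_pos_of_neg one_pos hα0
  have hn0 : (0:ℝ) < n := by
    rcases Nat.eq_zero_or_pos n with h | h
    · exfalso; subst h; simp at hα1; linarith
    · exact_mod_cast h
  have hr : (n:ℝ) < -(1/α) := by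
    have h1 : -α < 1/n := by linarith
    have h2 : (n:ℝ) * (-α) < 1 := by
      calc (n:ℝ) * (-α) < (n:ℝ) * (1/n) := mul_lt_mul_of_pos_left h1 hn0
        _ = 1 := by field_simp
    have h3 : (n:ℝ) < 1/(-α) := (lt_div_iff₀ hnα).mpr h2
    rwa [div_neg] at h3
  -- basic facts about φ
  have hφm : Measurable φ := hlsc.measurable
  have hψm : Measurable fun x => (φ x).toReal := hφm.ereal_toReal
  have hψ0 : ∀ x, 0 ≤ (φ x).toReal := by
    intro x
    by_cases hx : φ x = ⊤
    · simp [hx]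
    · have h := EReal.toReal_le_toReal (hnonneg x) (by simp) hx
      simpa using h
  have hA1 : ∀ x, (1:ℝ) ≤ 1 - α * (φ x).toReal := by
    intro x
    have h := mul_nonpos_of_nonpos_of_nonneg hα0.le (hψ0 x)
    linarith
  have hApos : ∀ x, (0:ℝ) < 1 - α * (φ x).toReal := fun x => lt_of_lt_of_le one_pos (hA1 x)
  -- key pointwise inequality ψ·A^{1/α-1} ≤ (-α)⁻¹·A^{1/α}
  have hψA : ∀ x, (φ x).toReal * (1 - α * (φ x).toReal) ^ (1/α - 1)
      ≤ (-α)⁻¹ * (1 - α * (φ x).toReal) ^ (1/α) := by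
    intro x
    set A := 1 - α * (φ x).toReal with hAdef
    have hA : 0 < A := hApos x
    have h1 : (φ x).toReal ≤ (-α)⁻¹ * A := by
      rw [inv_mul_eq_div, le_div_iff₀ hnα, hAdef]
      nlinarith [hψ0 x]
    have h2 : A ^ (1/α - 1) * A = A ^ (1/α) := by
      rw [← Real.rpow_add_one (ne_of_gt hA) (1/α - 1)]
      norm_num
    calc (φ x).toReal * A ^ (1/α - 1)
        ≤ ((-α)⁻¹ * A) * A ^ (1/α - 1) :=
          mul_le_mul_of_nonneg_right h1 (rpow_nonneg hA.le _)
      _ = (-α)⁻¹ * (A ^ (1/α - 1) * A) := by ring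
      _ = (-α)⁻¹ * A ^ (1/α) := by rw [h2]
  -- nonnegativity and boundedness of f
  have hf0 : ∀ x, 0 ≤ acFn α φ x := by
    intro x
    unfold acFn
    split
    · exact le_rfl
    · exact rpow_nonneg (hApos x).le _
  have hf1 : ∀ x, acFn α φ x ≤ 1 := by
    intro x
    unfold acFn
    split
    · norm_num
    · exact rpow_le_one_of_one_le_of_nonpos (hA1 x) hia.le
  -- measurability of f
  have hfmeas : Measurable (acFn α φ) := by
    unfold acFn
    exact Measurable.ite (hφm (measurableSet_singleton ⊤)) measurable_const (by fun_prop)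
  -- coercivity: tail bound
  obtain ⟨c, hcpos, hev⟩ := hcoer
  rw [Filter.eventually_comap] at hev
  obtain ⟨M, hM⟩ := Filter.eventually_atTop.mp hev
  have hco : ∀ x : EuclideanSpace ℝ (Fin n), M ≤ ‖x‖ → ((c*‖x‖ : ℝ) : EReal) ≤ φ x :=
    fun x hx => hM ‖x‖ hx x rfl
  set m : ℝ := min 1 ((-α)*c) with hmdef
  have hmpos : 0 < m := lt_min one_pos (mul_pos hnα hcpos)
  -- integrability of f
  have hfint : Integrable (acFn α φ) (volume : Measure (EuclideanSpace ℝ (Fin n))) := by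
    apply aux_integrable_decay (C := m^(1/α)) (M := M) hfmeas.aestronglyMeasurable hr
      (fun x => by rw [abs_of_nonneg (hf0 x)]; exact hf1 x)
    intro x hx
    rw [abs_of_nonneg (hf0 x), neg_neg]
    by_cases hxt : φ x = ⊤
    · simp only [acFn, if_pos hxt]
      exact mul_nonneg (rpow_nonneg hmpos.le _) (rpow_nonneg (by positivity) _)
    · have hcx : c*‖x‖ ≤ (φ x).toReal := by
        have h := EReal.toReal_le_toReal (hco x hx) (EReal.coe_ne_bot _) hxt
        simpa only [EReal.toReal_coe] using h
      have hb1 : m*(1+‖x‖) ≤ 1 - α*(φ x).toReal := by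
        have h1 : m ≤ 1 := min_le_left _ _
        have h2 : m ≤ (-α)*c := min_le_right _ _
        have h4 : (0:ℝ) ≤ ‖x‖ := norm_nonneg x
        have h5 : m * ‖x‖ ≤ ((-α)*c) * ‖x‖ := mul_le_mul_of_nonneg_right h2 h4
        have h6 : ((-α)*c) * ‖x‖ ≤ (-α) * (φ x).toReal := by
          have := mul_le_mul_of_nonneg_left hcx hnα.le
          calc ((-α)*c)*‖x‖ = (-α)*(c*‖x‖) := by ring
            _ ≤ (-α) * (φ x).toReal := this
        nlinarith
      simp only [acFn, if_neg hxt]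
      calc (1 - α*(φ x).toReal)^(1/α) ≤ (m*(1+‖x‖))^(1/α) :=
            rpow_le_rpow_of_nonpos (by positivity) hb1 hia.le
        _ = m^(1/α) * (1+‖x‖)^(1/α) := Real.mul_rpow hmpos.le (by positivity)
  -- measurability of gfun t
  have hgm : ∀ t, Measurable (gfun α β₁ β₂ φ t) := by
    intro t
    unfold gfun
    exact Measurable.ite (hφm (measurableSet_singleton ⊤)) measurable_const (by fun_prop)
  -- uniform small-time base bound
  set t₁ : ℝ := (2*(1+|α*β₂|))⁻¹ with ht₁def
  have ht₁pos : 0 < t₁ := by positivity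
  have ht₁half : |α*β₂| * t₁ ≤ 1/2 := by
    have h1 : |α*β₂| * t₁ ≤ (1+|α*β₂|) * t₁ :=
      mul_le_mul_of_nonneg_right (by linarith [abs_nonneg (α*β₂)]) ht₁pos.le
    have h2 : (1+|α*β₂|) * t₁ = 1/2 := by
      rw [ht₁def]
      have h0 : (1+|α*β₂|) ≠ 0 := by positivity
      field_simp
    linarith
  have hbase2 : ∀ y (s : ℝ), 0 ≤ s → s ≤ t₁ →
      (1 - α*(φ y).toReal)/2 ≤ 1 - α*(φ y).toReal - (α*β₁*(φ y).toReal - α*β₂)*s := by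
    intro y s hs hst
    have e1 : 0 ≤ (-α)*(β₁*((φ y).toReal*s)) :=
      mul_nonneg hnα.le (mul_nonneg hβ₁ (mul_nonneg (hψ0 y) hs))
    have e2 : -(1/2) ≤ α*β₂*s := by
      have a2 := mul_le_mul_of_nonneg_right (neg_abs_le (α*β₂)) hs
      have a3 : |α*β₂| * s ≤ |α*β₂| * t₁ := mul_le_mul_of_nonneg_left hst (abs_nonneg _)
      linarith [ht₁half]
    nlinarith [hA1 y, e1, e2]
  have hbasepos : ∀ y (s : ℝ), 0 ≤ s → s ≤ t₁ →
      0 < 1 - α*(φ y).toReal - (α*β₁*(φ y).toReal - α*β₂)*s := by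
    intro y s hs hst
    have := hbase2 y s hs hst
    have := hApos y
    linarith
  -- half-scaling bound for rpow of the perturbed base
  have hkey : ∀ (p : ℝ), p ≤ 0 → ∀ y (s : ℝ), 0 ≤ s → s ≤ t₁ →
      (1 - α*(φ y).toReal - (α*β₁*(φ y).toReal - α*β₂)*s)^p
        ≤ 2^(-p) * (1 - α*(φ y).toReal)^p := by
    intro p hp y s hs hst
    have h2 := hbase2 y s hs hst
    have hA : 0 < 1 - α*(φ y).toReal := hApos y
    calc (1 - α*(φ y).toReal - (α*β₁*(φ y).toReal - α*β₂)*s)^p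
        ≤ ((1 - α*(φ y).toReal)/2)^p := rpow_le_rpow_of_nonpos (by positivity) h2 hp
      _ = 2^(-p) * (1 - α*(φ y).toReal)^p := by
          rw [Real.div_rpow hA.le (by norm_num : (0:ℝ) ≤ 2),
            Real.rpow_neg (by norm_num : (0:ℝ) ≤ 2), div_eq_mul_inv]
          ring
  -- integrability of gfun t for 0 ≤ t ≤ t₁
  have hgint : ∀ t : ℝ, 0 ≤ t → t ≤ t₁ → Integrable (gfun α β₁ β₂ φ t) volume := by
    intro t ht0 ht1
    refine (hfint.const_mul (2^(-(1/α)))).mono' (hgm t).aestronglyMeasurable ?_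
    filter_upwards with y
    by_cases hy : φ y = ⊤
    · simp only [gfun, if_pos hy, acFn]
      simp [hy]
    · simp only [gfun, if_neg hy, acFn]
      rw [Real.norm_eq_abs, abs_of_nonneg (rpow_nonneg (hbasepos y t ht0 ht1).le _)]
      exact hkey (1/α) hia.le y t ht0 ht1
  -- the limit integrand
  set ell : EuclideanSpace ℝ (Fin n) → ℝ := fun y =>
    if φ y = ⊤ then 0
    else (β₂ - β₁*(φ y).toReal) * (1 - α*(φ y).toReal)^(1/α - 1) with helldef
  set C₀ : ℝ := 2^(1-1/α) * ((-α)⁻¹*β₁ + |β₂|) with hC₀def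
  have hC₀0 : 0 ≤ C₀ := by
    apply mul_nonneg (rpow_nonneg (by norm_num) _)
    exact add_nonneg (mul_nonneg (inv_nonneg.mpr hnα.le) hβ₁) (abs_nonneg _)
  have hmono : (𝓝[>] (0:ℝ)) ≤ 𝓝[≠] (0:ℝ) :=
    nhdsWithin_mono 0 (fun x hx => ne_of_gt hx)
  -- the dominated convergence for the difference quotients
  have hDCT : Tendsto (fun t : ℝ => ∫ y, (gfun α β₁ β₂ φ t y - gfun α β₁ β₂ φ 0 y)/t)
      (𝓝[>] (0:ℝ)) (𝓝 (∫ y, ell y)) := by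
    apply tendsto_integral_filter_of_dominated_convergence (fun y => C₀ * acFn α φ y)
    · exact Filter.Eventually.of_forall fun t =>
        (((hgm t).sub (hgm 0)).div_const t).aestronglyMeasurable
    · filter_upwards [Ioo_mem_nhdsGT_of_mem (Set.mem_Ico.mpr ⟨le_refl (0:ℝ), ht₁pos⟩)] with t ht
      apply Filter.Eventually.of_forall
      intro y
      by_cases hy : φ y = ⊤
      · simp [gfun, hy, acFn]
      · simp only [gfun, acFn, if_neg hy]
        have hbc : ∀ s ∈ Set.Icc (0:ℝ) t,
            0 < 1 - α*(φ y).toReal - (α*β₁*(φ y).toReal - α*β₂)*s :=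
          fun s hs => hbasepos y s hs.1 (le_trans hs.2 ht.2.le)
        have hder : ∀ s ∈ Set.Icc (0:ℝ) t,
            HasDerivAt (fun u : ℝ =>
                (1 - α*(φ y).toReal - (α*β₁*(φ y).toReal - α*β₂)*u)^(1/α))
              (-(α*β₁*(φ y).toReal - α*β₂) * (1/α) *
                (1 - α*(φ y).toReal - (α*β₁*(φ y).toReal - α*β₂)*s)^(1/α - 1)) s := by
          intro s hs
          have h1 : HasDerivAt (fun u : ℝ =>
              1 - α*(φ y).toReal - (α*β₁*(φ y).toReal - α*β₂)*u)
              (-(α*β₁*(φ y).toReal - α*β₂)) s := by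
            simpa [Pi.sub_def] using (hasDerivAt_const s (1 - α*(φ y).toReal)).sub
              ((hasDerivAt_id s).const_mul (α*β₁*(φ y).toReal - α*β₂))
          exact h1.rpow_const (Or.inl (ne_of_gt (hbc s hs)))
        have hcont : ContinuousOn (fun u : ℝ =>
            (1 - α*(φ y).toReal - (α*β₁*(φ y).toReal - α*β₂)*u)^(1/α)) (Set.Icc 0 t) :=
          fun s hs => ((hder s hs).continuousAt).continuousWithinAt
        obtain ⟨cc, hccIoo, hslope⟩ := exists_hasDerivAt_eq_slope
          (fun u : ℝ => (1 - α*(φ y).toReal - (α*β₁*(φ y).toReal - α*β₂)*u)^(1/α))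
          (fun s : ℝ => -(α*β₁*(φ y).toReal - α*β₂) * (1/α) *
            (1 - α*(φ y).toReal - (α*β₁*(φ y).toReal - α*β₂)*s)^(1/α - 1))
          ht.1 hcont (fun s hs => hder s ⟨hs.1.le, hs.2.le⟩)
        have hq : ((1 - α*(φ y).toReal - (α*β₁*(φ y).toReal - α*β₂)*t)^(1/α)
              - (1 - α*(φ y).toReal - (α*β₁*(φ y).toReal - α*β₂)*0)^(1/α))/t
            = -(α*β₁*(φ y).toReal - α*β₂) * (1/α) *
              (1 - α*(φ y).toReal - (α*β₁*(φ y).toReal - α*β₂)*cc)^(1/α - 1) := by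
          rw [hslope]
          norm_num
        rw [hq]
        have hccI : cc ∈ Set.Icc (0:ℝ) t := ⟨hccIoo.1.le, hccIoo.2.le⟩
        have hXnn : 0 ≤ (1 - α*(φ y).toReal - (α*β₁*(φ y).toReal - α*β₂)*cc)^(1/α - 1) :=
          rpow_nonneg (hbc cc hccI).le _
        have hnorm : ‖-(α*β₁*(φ y).toReal - α*β₂) * (1/α) *
              (1 - α*(φ y).toReal - (α*β₁*(φ y).toReal - α*β₂)*cc)^(1/α - 1)‖
            = |α*β₁*(φ y).toReal - α*β₂| * |1/α| *
              (1 - α*(φ y).toReal - (α*β₁*(φ y).toReal - α*β₂)*cc)^(1/α - 1) := by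
          rw [Real.norm_eq_abs, abs_mul, abs_mul, abs_neg, abs_of_nonneg hXnn]
        rw [hnorm]
        have habsi : |1/α| = (-α)⁻¹ := by
          rw [abs_of_neg hia]
          field_simp
        have hBabs : |α*β₁*(φ y).toReal - α*β₂| ≤ (-α)*(β₁*(φ y).toReal + |β₂|) := by
          have h1 : |α*β₁*(φ y).toReal - α*β₂| ≤ |α*β₁*(φ y).toReal| + |α*β₂| := abs_sub _ _
          have h2 : |α*β₁*(φ y).toReal| = (-α)*(β₁*(φ y).toReal) := by
            rw [abs_mul, abs_mul, abs_of_neg hα0, abs_of_nonneg hβ₁, abs_of_nonneg (hψ0 y)]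
            ring
          have h3 : |α*β₂| = (-α)*|β₂| := by
            rw [abs_mul, abs_of_neg hα0]
          nlinarith [abs_nonneg (α*β₂)]
        have step1 : |α*β₁*(φ y).toReal - α*β₂| * |1/α| ≤ β₁*(φ y).toReal + |β₂| := by
          rw [habsi]
          calc |α*β₁*(φ y).toReal - α*β₂| * (-α)⁻¹
              ≤ ((-α)*(β₁*(φ y).toReal + |β₂|)) * (-α)⁻¹ :=
                mul_le_mul_of_nonneg_right hBabs (inv_nonneg.mpr hnα.le)
            _ = β₁*(φ y).toReal + |β₂| := by
                field_simp
        have hmid : (1 - α*(φ y).toReal - (α*β₁*(φ y).toReal - α*β₂)*cc)^(1/α - 1)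
            ≤ 2^(1-1/α) * (1 - α*(φ y).toReal)^(1/α - 1) := by
          have h := hkey (1/α - 1) (by linarith) y cc hccI.1 (le_trans hccI.2 ht.2.le)
          rw [show -(1/α - 1) = 1 - 1/α by ring] at h
          exact h
        calc |α*β₁*(φ y).toReal - α*β₂| * |1/α| *
              (1 - α*(φ y).toReal - (α*β₁*(φ y).toReal - α*β₂)*cc)^(1/α - 1)
            ≤ (β₁*(φ y).toReal + |β₂|) * (2^(1-1/α) * (1 - α*(φ y).toReal)^(1/α - 1)) := by
              apply mul_le_mul step1 hmid hXnn
              exact add_nonneg (mul_nonneg hβ₁ (hψ0 y)) (abs_nonneg _)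
          _ ≤ C₀ * (1 - α*(φ y).toReal)^(1/α) := by
              have k2 : (1 - α*(φ y).toReal)^(1/α - 1) ≤ (1 - α*(φ y).toReal)^(1/α) :=
                rpow_le_rpow_of_exponent_le (hA1 y) (by linarith)
              have k1 := hψA y
              have hP : (0:ℝ) < 2^(1-1/α) := rpow_pos_of_pos (by norm_num) _
              rw [hC₀def]
              calc (β₁*(φ y).toReal + |β₂|) * (2^(1-1/α) * (1 - α*(φ y).toReal)^(1/α - 1))
                  = 2^(1-1/α) * (β₁*((φ y).toReal * (1 - α*(φ y).toReal)^(1/α - 1))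
                      + |β₂| * (1 - α*(φ y).toReal)^(1/α - 1)) := by ring
                _ ≤ 2^(1-1/α) * (β₁*((-α)⁻¹ * (1 - α*(φ y).toReal)^(1/α))
                      + |β₂| * (1 - α*(φ y).toReal)^(1/α)) := by
                    apply mul_le_mul_of_nonneg_left _ hP.le
                    exact add_le_add (mul_le_mul_of_nonneg_left k1 hβ₁)
                      (mul_le_mul_of_nonneg_left k2 (abs_nonneg β₂))
                _ = (2^(1-1/α) * ((-α)⁻¹*β₁ + |β₂|)) * (1 - α*(φ y).toReal)^(1/α) := by
                    ring
    · exact hfint.const_mul C₀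
    · apply Filter.Eventually.of_forall
      intro y
      by_cases hy : φ y = ⊤
      · have h0 : ell y = 0 := by rw [helldef]; simp [hy]
        rw [h0]
        have : (fun t : ℝ => (gfun α β₁ β₂ φ t y - gfun α β₁ β₂ φ 0 y)/t)
            = fun t : ℝ => 0 := by
          funext t
          simp [gfun, hy]
        rw [this]
        exact tendsto_const_nhds
      · have h1 : HasDerivAt (fun u : ℝ =>
            1 - α*(φ y).toReal - (α*β₁*(φ y).toReal - α*β₂)*u)
            (-(α*β₁*(φ y).toReal - α*β₂)) 0 := by
          simpa [Pi.sub_def] using (hasDerivAt_const (0:ℝ) (1 - α*(φ y).toReal)).sub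
            ((hasDerivAt_id (0:ℝ)).const_mul (α*β₁*(φ y).toReal - α*β₂))
        have hd0 := h1.rpow_const (p := 1/α)
          (Or.inl (ne_of_gt (hbasepos y 0 le_rfl ht₁pos.le)))
        have hval : -(α*β₁*(φ y).toReal - α*β₂) * (1/α) *
            (1 - α*(φ y).toReal - (α*β₁*(φ y).toReal - α*β₂)*0)^(1/α - 1) = ell y := by
          rw [helldef]
          simp only [if_neg hy, mul_zero, sub_zero]
          have hc : -(α*β₁*(φ y).toReal - α*β₂) * (1/α) = β₂ - β₁*(φ y).toReal := by
            field_simp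
            ring
          rw [hc]
        rw [hval] at hd0
        have hs := (hasDerivAt_iff_tendsto_slope.mp hd0).mono_left hmono
        refine Tendsto.congr' ?_ hs
        filter_upwards [self_mem_nhdsWithin] with t ht
        have ht' : (t:ℝ) ≠ 0 := ne_of_gt ht
        simp [slope_def_field, gfun, if_neg hy]
  -- the slope of the volume factor
  have hq1 : Tendsto (fun t : ℝ => ((1+β₁*t)^n - 1)/t) (𝓝[>] (0:ℝ)) (𝓝 ((n:ℝ)*β₁)) := by
    have h0 : HasDerivAt (fun t : ℝ => 1+β₁*t) β₁ 0 := by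
      simpa [Pi.add_def] using (hasDerivAt_const (0:ℝ) (1:ℝ)).add ((hasDerivAt_id (0:ℝ)).const_mul β₁)
    have hd : HasDerivAt (fun t : ℝ => (1+β₁*t)^n) ((n:ℝ)*β₁) 0 := by
      have h2 := h0.pow n
      norm_num at h2
      exact h2
    have hs := (hasDerivAt_iff_tendsto_slope.mp hd).mono_left hmono
    refine Tendsto.congr' ?_ hs
    filter_upwards [self_mem_nhdsWithin] with t ht
    have ht' : (t:ℝ) ≠ 0 := ne_of_gt ht
    simp [slope_def_field]
  -- scaling identity
  have hsub : ∀ t : ℝ, 0 < t →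
      ∫ x, fhat α β₁ β₂ φ t x = (1+β₁*t)^n * ∫ y, gfun α β₁ β₂ φ t y := by
    intro t ht
    have hc0 : (0:ℝ) < 1+β₁*t := by nlinarith
    have h := MeasureTheory.Measure.integral_comp_smul (volume : Measure (EuclideanSpace ℝ (Fin n)))
      (fhat α β₁ β₂ φ t) (1+β₁*t)
    rw [finrank_euclideanSpace_fin] at h
    have h2 : (∫ y, fhat α β₁ β₂ φ t ((1+β₁*t) • y)) = ∫ y, gfun α β₁ β₂ φ t y := by
      congr 1
      funext y
      exact fhat_smul α β₁ β₂ φ t hc0 y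
    rw [h2] at h
    rw [h, abs_of_nonneg (inv_nonneg.mpr (pow_nonneg hc0.le n)), smul_eq_mul]
    have hne : ((1+β₁*t):ℝ)^n ≠ 0 := by positivity
    field_simp
  have hI0 : ∫ y, gfun α β₁ β₂ φ 0 y = ∫ x, acFn α φ x := by rw [gfun_zero]
  have hquot : ∀ᶠ t in 𝓝[>] (0:ℝ),
      ((∫ y, gfun α β₁ β₂ φ t y) - ∫ y, gfun α β₁ β₂ φ 0 y)/t
        = ∫ y, (gfun α β₁ β₂ φ t y - gfun α β₁ β₂ φ 0 y)/t := by
    filter_upwards [Ioo_mem_nhdsGT_of_mem (Set.mem_Ico.mpr ⟨le_refl (0:ℝ), ht₁pos⟩)] with t ht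
    rw [← integral_sub (hgint t ht.1.le ht.2.le) (hgint 0 le_rfl ht₁pos.le), ← integral_div]
  have hQ' : Tendsto (fun t : ℝ =>
      ((∫ y, gfun α β₁ β₂ φ t y) - ∫ y, gfun α β₁ β₂ φ 0 y)/t)
      (𝓝[>] (0:ℝ)) (𝓝 (∫ y, ell y)) := hDCT.congr' (hquot.mono fun _ h => h.symm)
  have htt : Tendsto (fun t : ℝ => t) (𝓝[>] (0:ℝ)) (𝓝 0) :=
    tendsto_id'.mpr nhdsWithin_le_nhds
  have hItend : Tendsto (fun t : ℝ => ∫ y, gfun α β₁ β₂ φ t y) (𝓝[>] (0:ℝ))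
      (𝓝 (∫ y, gfun α β₁ β₂ φ 0 y)) := by
    have h1 : Tendsto (fun t : ℝ => (∫ y, gfun α β₁ β₂ φ 0 y)
        + t * (((∫ y, gfun α β₁ β₂ φ t y) - ∫ y, gfun α β₁ β₂ φ 0 y)/t))
        (𝓝[>] (0:ℝ)) (𝓝 ((∫ y, gfun α β₁ β₂ φ 0 y) + 0 * (∫ y, ell y))) :=
      tendsto_const_nhds.add (htt.mul hQ')
    rw [zero_mul, add_zero] at h1
    refine Tendsto.congr' ?_ h1
    filter_upwards [self_mem_nhdsWithin] with t ht
    have ht' : (t:ℝ) ≠ 0 := ne_of_gt ht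
    field_simp
    ring
  have hfinal : Tendsto (fun t : ℝ =>
      ((∫ x, fhat α β₁ β₂ φ t x) - ∫ x, acFn α φ x)/t) (𝓝[>] (0:ℝ))
      (𝓝 ((n:ℝ)*β₁ * (∫ y, gfun α β₁ β₂ φ 0 y) + ∫ y, ell y)) := by
    have h1 := (hq1.mul hItend).add hQ'
    refine Tendsto.congr' ?_ h1
    filter_upwards [self_mem_nhdsWithin] with t ht
    rw [hsub t ht, ← hI0]
    ring
  constructor
  · -- Part 1: well-definedness
    refine ⟨t₁, ht₁pos, ?_⟩
    intro t ht x hx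
    have hψ0' : 0 ≤ (φ ((1+β₁*t)⁻¹ • x)).toReal := hψ0 _
    have hc1 : (0:ℝ) ≤ 1 + β₁*t := by nlinarith [ht.1]
    have h1 : α * ((1+β₁*t) * (φ ((1+β₁*t)⁻¹ • x)).toReal) ≤ 0 :=
      mul_nonpos_of_nonpos_of_nonneg hα0.le (mul_nonneg hc1 hψ0')
    have h2 : -(1/2) ≤ α*β₂*t := by
      have a2 := mul_le_mul_of_nonneg_right (neg_abs_le (α*β₂)) ht.1.le
      have a3 : |α*β₂| * t ≤ |α*β₂| * t₁ := mul_le_mul_of_nonneg_left ht.2.le (abs_nonneg _)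
      linarith [ht₁half]
    linarith
  · -- Part 2: the limit
    have hF2eq : (fun x => acFn α φ x ^ (1-α)) = (fun x =>
        if φ x = ⊤ then 0 else (1 - α*(φ x).toReal)^(1/α - 1)) := by
      funext x
      by_cases hx : φ x = ⊤
      · simp only [acFn, if_pos hx]
        exact Real.zero_rpow (by linarith)
      · simp only [acFn, if_neg hx]
        rw [← Real.rpow_mul (hApos x).le]
        congr 1
        rw [mul_sub, mul_one]
        congr 1
        rw [one_div, inv_mul_cancel₀ hαne]
    have hF2int : Integrable (fun x : EuclideanSpace ℝ (Fin n) =>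
        if φ x = ⊤ then 0 else (1 - α*(φ x).toReal)^(1/α - 1)) volume := by
      refine hfint.mono' ?_ ?_
      · exact (Measurable.ite (hφm (measurableSet_singleton ⊤)) measurable_const
          (by fun_prop)).aestronglyMeasurable
      · filter_upwards with x
        by_cases hx : φ x = ⊤
        · simp [hx, acFn]
        · simp only [if_neg hx, acFn, Real.norm_eq_abs]
          rw [abs_of_nonneg (rpow_nonneg (hApos x).le _)]
          exact rpow_le_rpow_of_exponent_le (hA1 x) (by linarith)
    have hF3int : Integrable (fun x : EuclideanSpace ℝ (Fin n) =>
        if φ x = ⊤ then 0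
        else (φ x).toReal * (1 - α*(φ x).toReal)^(1/α - 1)) volume := by
      refine (hfint.const_mul ((-α)⁻¹)).mono' ?_ ?_
      · exact (Measurable.ite (hφm (measurableSet_singleton ⊤)) measurable_const
          (by fun_prop)).aestronglyMeasurable
      · filter_upwards with x
        by_cases hx : φ x = ⊤
        · simp [hx, acFn]
        · simp only [if_neg hx, acFn, Real.norm_eq_abs]
          rw [abs_of_nonneg (mul_nonneg (hψ0 x) (rpow_nonneg (hApos x).le _))]
          exact hψA x
    have hellsplit : ∫ y, ell y
        = β₂ * (∫ x, (if φ x = ⊤ then 0 else (1 - α*(φ x).toReal)^(1/α - 1)))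
          - β₁ * (∫ x, (if φ x = ⊤ then 0
            else (φ x).toReal * (1 - α*(φ x).toReal)^(1/α - 1))) := by
      rw [← integral_const_mul, ← integral_const_mul,
        ← integral_sub (hF2int.const_mul β₂) (hF3int.const_mul β₁)]
      congr 1
      funext y
      rw [helldef]
      by_cases hy : φ y = ⊤
      · simp [hy]
      · simp only [if_neg hy]
        ring
    rw [hF2eq]
    have hval : β₂ * (∫ x, (if φ x = ⊤ then 0 else (1 - α*(φ x).toReal)^(1/α - 1)))
        + β₁ * ((n:ℝ) * (∫ x, acFn α φ x) - ∫ x, (if φ x = ⊤ then 0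
            else (φ x).toReal * (1 - α*(φ x).toReal)^(1/α - 1)))
        = (n:ℝ)*β₁ * (∫ y, gfun α β₁ β₂ φ 0 y) + ∫ y, ell y := by
      rw [hellsplit, hI0]
      ring
    rw [hval]
    exact hfinal
end
end

section
/- Let −1/n < α < 0. Then there exist a constant C ∈ ℝ and exponents α₁ ∈ (0, −αn) and α₂ ∈ (−αn, 1) such that for every ϱ ∈ P₁(ℝⁿ), F_α(ϱ) ≥ C − (∫_{ℝⁿ} |x| dϱ(x))^{α₁} − (∫_{ℝⁿ} |x| dϱ(x))^{α₂}. -/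
/-!
STATEMENT 13 (Lemma 4.9): for -1/n < α < 0 there are a constant C and
exponents α₁ ∈ (0, -αn), α₂ ∈ (-αn, 1) such that for every ϱ ∈ P₁(ℝⁿ),
F_α(ϱ) ≥ C - (∫|x| dϱ)^{α₁} - (∫|x| dϱ)^{α₂}.
-/

noncomputable section

open MeasureTheory Filter Real
open scoped ENNReal RealInnerProductSpace Topology

/-- Membership in `P₁(ℝⁿ)`: a probability measure with finite first moment. -/
def IsP1 {n : ℕ} (ϱ : Measure (EuclideanSpace ℝ (Fin n))) : Prop :=
  IsProbabilityMeasure ϱ ∧ Integrable (fun x => ‖x‖) ϱ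

/-- `F_α(ϱ) = -∫ ρ^{1/(1-α)} dx`, where `ρ` is the density of the absolutely
continuous part of `ϱ` with respect to the Lebesgue measure. -/
noncomputable def Falpha {n : ℕ} (α : ℝ) (ϱ : Measure (EuclideanSpace ℝ (Fin n))) : EReal :=
  - ((∫⁻ x, (ϱ.rnDeriv volume x) ^ (1 / (1 - α)) ∂volume : ℝ≥0∞) : EReal)


lemma aux_young {p b A M : ℝ} (hA : 0 ≤ A) (hM : 0 ≤ M) (hp : 0 < p) (hpb : p < b) :
    A * M ^ p ≤ A ^ (b / (b - p)) + M ^ b := by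
  rcases eq_or_lt_of_le hM with hM0 | hM0
  · rw [← hM0, Real.zero_rpow hp.ne', mul_zero]
    positivity
  rcases eq_or_lt_of_le hA with hA0 | hA0
  · rw [← hA0, zero_mul]
    positivity
  have hbp : 0 < b - p := by linarith
  rcases le_total A (M ^ (b - p)) with h | h
  · have : A * M ^ p ≤ M ^ b :=
      calc A * M ^ p ≤ M ^ (b - p) * M ^ p :=
            mul_le_mul_of_nonneg_right h (by positivity)
        _ = M ^ b := by rw [← Real.rpow_add hM0]; ring_nf
    have h2 : (0:ℝ) ≤ A ^ (b / (b - p)) := by positivity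
    linarith
  · have h1 : M ^ p ≤ A ^ (p / (b - p)) := by
      have := Real.rpow_le_rpow (by positivity) h (le_of_lt (by positivity : (0:ℝ) < p / (b-p)))
      rw [← Real.rpow_mul hM] at this
      have he : (b - p) * (p / (b - p)) = p := by field_simp
      rwa [he] at this
      -- (M^(b-p))^(p/(b-p)) = M^((b-p) * (p/(b-p))) = M^p
    have : A * M ^ p ≤ A ^ (b / (b - p)) :=
      calc A * M ^ p ≤ A * A ^ (p / (b - p)) := mul_le_mul_of_nonneg_left h1 hA
        _ = A ^ (1 + p / (b - p)) := by
            rw [Real.rpow_add hA0, Real.rpow_one]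
        _ = A ^ (b / (b - p)) := by
            congr 1
            field_simp
            ring
    have h2 : (0:ℝ) ≤ M ^ b := by positivity
    linarith

lemma aux_onep {M p : ℝ} (hM : 0 ≤ M) (hp0 : 0 ≤ p) (hp1 : p ≤ 1) :
    (1 + M) ^ p ≤ 1 + M ^ p := by
  have := NNReal.rpow_add_le_add_rpow (1 : NNReal) (Real.toNNReal M) hp0 hp1
  have h2 := NNReal.coe_le_coe.2 this
  push_cast at h2
  rw [Real.coe_toNNReal M hM] at h2
  simpa using h2

theorem statement13 {n : ℕ} (α : ℝ) (hα1 : -(1 / (n : ℝ)) < α) (hα0 : α < 0) :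
    ∃ (C α₁ α₂ : ℝ), α₁ ∈ Set.Ioo (0 : ℝ) (-α * n) ∧ α₂ ∈ Set.Ioo (-α * n) 1 ∧
      ∀ ϱ : Measure (EuclideanSpace ℝ (Fin n)), IsP1 ϱ →
        ((C - (∫ x, ‖x‖ ∂ϱ) ^ α₁ - (∫ x, ‖x‖ ∂ϱ) ^ α₂ : ℝ) : EReal) ≤ Falpha α ϱ := by
  have hn0 : 0 < (n : ℝ) := by
    rcases Nat.eq_zero_or_pos n with h | h
    · subst h; simp at hα1; linarith
    · exact_mod_cast h
  set p : ℝ := 1 / (1 - α) with hp_def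
  have h1α : (1 : ℝ) < 1 - α := by linarith
  have hp0 : 0 < p := by rw [hp_def]; positivity
  have hp1 : p < 1 := by rw [hp_def, div_lt_one (by linarith)]; linarith
  have h1p : 0 < 1 - p := by linarith
  have hna0 : 0 < -α * n := mul_pos (by linarith) hn0
  have hna : -α * n < 1 := by
    have h1 : -α < 1 / n := by linarith
    calc -α * n < (1 / n) * n := mul_lt_mul_of_pos_right h1 hn0
      _ = 1 := by field_simp
  set a : ℝ := (-α * n + 1) / 2 with ha_def
  have haL : -α * n < a := by rw [ha_def]; linarith
  have haU : a < 1 := by rw [ha_def]; linarith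
  have ha0 : 0 < a := lt_trans hna0 haL
  set r : ℝ := a * p / (1 - p) with hr_def
  have hnr : (n : ℝ) < r := by
    have hreq : r = a / (-α) := by
      rw [hr_def, hp_def]
      field_simp
      ring
    rw [hreq, lt_div_iff₀ (by linarith : (0:ℝ) < -α)]
    nlinarith
  have hr0 : 0 < r := lt_of_le_of_lt (Nat.cast_nonneg n) hnr
  set α₁ : ℝ := (-α * n) / 2 with hα₁_def
  set α₂ : ℝ := (max (-α * n) p + 1) / 2 with hα₂_def
  have hmax1 : max (-α * n) p < 1 := max_lt hna hp1
  have hα₂U : α₂ < 1 := by rw [hα₂_def]; linarith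
  have hα₂L : -α * n < α₂ := by
    have := le_max_left (-α * n) p
    rw [hα₂_def]; linarith
  have hpα₂ : p < α₂ := by
    have := le_max_right (-α * n) p
    rw [hα₂_def]; linarith
  set q : ℝ := α₂ / (α₂ - p) with hq_def
  -- the finite reference integral
  set K : ℝ≥0∞ := ∫⁻ x : EuclideanSpace ℝ (Fin n), ENNReal.ofReal ((1 + ‖x‖) ^ (-r)) ∂volume
    with hK_def
  have hK : K < ⊤ := by
    apply finite_integral_one_add_norm
    rwa [finrank_euclideanSpace_fin]
  have hKp : K ^ (1 - p) ≠ ⊤ := (ENNReal.rpow_lt_top_of_nonneg h1p.le hK.ne).ne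
  set A : ℝ := (K ^ (1 - p)).toReal with hA_def
  have hA0 : 0 ≤ A := ENNReal.toReal_nonneg
  refine ⟨-(A + A ^ q), α₁, α₂, ⟨by rw [hα₁_def]; linarith, by rw [hα₁_def]; linarith⟩,
    ⟨hα₂L, hα₂U⟩, ?_⟩
  intro ϱ hϱ
  obtain ⟨hprob, hint⟩ := hϱ
  set M : ℝ := ∫ x, ‖x‖ ∂ϱ with hM_def
  have hM0 : 0 ≤ M := integral_nonneg fun x => norm_nonneg x
  set ρ : EuclideanSpace ℝ (Fin n) → ℝ≥0∞ := ϱ.rnDeriv volume with hρ_def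
  have hρmeas : Measurable ρ := Measure.measurable_rnDeriv ϱ volume
  set B : EuclideanSpace ℝ (Fin n) → ℝ≥0∞ := fun x => ENNReal.ofReal (1 + ‖x‖) with hB_def
  have hBmeas : Measurable B := by rw [hB_def]; fun_prop
  have hB1 : ∀ x, 1 ≤ B x := fun x =>
    ENNReal.one_le_ofReal.2 (by simpa using norm_nonneg x)
  have hB0 : ∀ x, B x ≠ 0 := fun x => (lt_of_lt_of_le one_pos (hB1 x)).ne'
  have hBt : ∀ x, B x ≠ ⊤ := fun x => ENNReal.ofReal_ne_top
  have hconj : Real.HolderConjugate (1 / p) (1 / (1 - p)) := by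
    constructor
    · rw [one_div, one_div, inv_inv, inv_inv, inv_one]; ring
    · positivity
    · positivity
  -- Hölder
  have key : ∫⁻ x, ρ x ^ p ∂volume ≤
      (∫⁻ x, ρ x * B x ^ a ∂volume) ^ p * K ^ (1 - p) := by
    have hfm : AEMeasurable (fun x => ρ x ^ p * B x ^ (a * p)) volume := by fun_prop
    have hgm : AEMeasurable (fun x => B x ^ (-(a * p))) volume := by fun_prop
    have h := ENNReal.lintegral_mul_le_Lp_mul_Lq volume hconj hfm hgm
    have e1 : ∀ x, ((fun x => ρ x ^ p * B x ^ (a * p)) * fun x => B x ^ (-(a * p))) x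
        = ρ x ^ p := by
      intro x
      simp only [Pi.mul_apply]
      rw [mul_assoc, ← ENNReal.rpow_add _ _ (hB0 x) (hBt x)]
      simp
    have e2 : ∀ x, (ρ x ^ p * B x ^ (a * p)) ^ (1 / p) = ρ x * B x ^ a := by
      intro x
      rw [ENNReal.mul_rpow_of_nonneg _ _ (by positivity), ← ENNReal.rpow_mul,
        ← ENNReal.rpow_mul, mul_one_div_cancel hp0.ne', ENNReal.rpow_one]
      congr 1
      field_simp
    have e3 : ∀ x, (B x ^ (-(a * p))) ^ (1 / (1 - p)) = ENNReal.ofReal ((1 + ‖x‖) ^ (-r)) := by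
      intro x
      rw [← ENNReal.rpow_mul, hB_def]
      rw [ENNReal.ofReal_rpow_of_pos (by positivity)]
      congr 1
      rw [hr_def]
      field_simp
    rw [lintegral_congr e1, lintegral_congr e2, lintegral_congr e3] at h
    rwa [one_div_one_div, one_div_one_div] at h
  -- bound the first factor by the first moment
  have hint1 : Integrable (fun x => 1 + ‖x‖) ϱ := (integrable_const 1).add hint
  have hI1 : ∫⁻ x, ρ x * B x ^ a ∂volume ≤ ENNReal.ofReal (1 + M) := by
    have hBa : Measurable fun x => B x ^ a := by fun_prop
    have e1 : ∫⁻ x, ρ x * B x ^ a ∂volume = ∫⁻ x, B x ^ a ∂(volume.withDensity ρ) := by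
      rw [lintegral_withDensity_eq_lintegral_mul volume hρmeas hBa]
      rfl
    rw [e1]
    calc ∫⁻ x, B x ^ a ∂(volume.withDensity ρ)
        ≤ ∫⁻ x, B x ^ a ∂ϱ :=
          lintegral_mono' (Measure.withDensity_rnDeriv_le ϱ volume) le_rfl
      _ ≤ ∫⁻ x, B x ∂ϱ := by
          apply lintegral_mono
          intro x
          conv_rhs => rw [← ENNReal.rpow_one (B x)]
          exact ENNReal.rpow_le_rpow_of_exponent_le (hB1 x) haU.le
      _ = ENNReal.ofReal (1 + M) := by
          rw [hB_def, ← MeasureTheory.ofReal_integral_eq_lintegral_ofReal hint1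
            (Filter.Eventually.of_forall fun x => by positivity)]
          congr 1
          rw [integral_add (integrable_const 1) hint]
          simp [hM_def]
  -- combine
  have main : ∫⁻ x, ρ x ^ p ∂volume ≤ ENNReal.ofReal ((1 + M) ^ p * A) := by
    calc ∫⁻ x, ρ x ^ p ∂volume ≤ (∫⁻ x, ρ x * B x ^ a ∂volume) ^ p * K ^ (1 - p) := key
      _ ≤ (ENNReal.ofReal (1 + M)) ^ p * K ^ (1 - p) := by
          gcongr
      _ = ENNReal.ofReal ((1 + M) ^ p) * ENNReal.ofReal A := by
          rw [ENNReal.ofReal_rpow_of_pos (by positivity), hA_def, ENNReal.ofReal_toReal hKp]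
      _ = ENNReal.ofReal ((1 + M) ^ p * A) := by
          rw [ENNReal.ofReal_mul (by positivity)]
  have hreal : (1 + M) ^ p * A ≤ (A + A ^ q) + (M ^ α₁ + M ^ α₂) := by
    have h1 : (1 + M) ^ p ≤ 1 + M ^ p := aux_onep hM0 hp0.le hp1.le
    have h2 : A * M ^ p ≤ A ^ q + M ^ α₂ := aux_young hA0 hM0 hp0 hpα₂
    have h3 : (0:ℝ) ≤ M ^ α₁ := by positivity
    calc (1 + M) ^ p * A ≤ (1 + M ^ p) * A := by
          apply mul_le_mul_of_nonneg_right h1 hA0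
      _ = A + A * M ^ p := by ring
      _ ≤ (A + A ^ q) + (M ^ α₁ + M ^ α₂) := by linarith
  -- conclude in EReal
  have hD0 : (0:ℝ) ≤ (A + A ^ q) + (M ^ α₁ + M ^ α₂) := by positivity
  have goal_eq : (-(A + A ^ q) - M ^ α₁ - M ^ α₂ : ℝ)
      = -((A + A ^ q) + (M ^ α₁ + M ^ α₂)) := by ring
  rw [Falpha]
  rw [goal_eq, EReal.coe_neg, EReal.neg_le_neg_iff]
  have hLD : (∫⁻ x, (ϱ.rnDeriv volume x) ^ (1 / (1 - α)) ∂volume)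
      ≤ ENNReal.ofReal ((A + A ^ q) + (M ^ α₁ + M ^ α₂)) := by
    refine le_trans ?_ (ENNReal.ofReal_le_ofReal (le_trans hreal le_rfl))
    exact main
  calc ((∫⁻ x, (ϱ.rnDeriv volume x) ^ (1 / (1 - α)) ∂volume : ℝ≥0∞) : EReal)
      ≤ ((ENNReal.ofReal ((A + A ^ q) + (M ^ α₁ + M ^ α₂)) : ℝ≥0∞) : EReal) :=
        EReal.coe_ennreal_le_coe_ennreal_iff.2 hLD
    _ = (((A + A ^ q) + (M ^ α₁ + M ^ α₂) : ℝ) : EReal) := by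
        rw [EReal.coe_ennreal_ofReal, max_eq_left hD0]
end
end
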